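/- arXiv:1607.05499 — 6 statements merged into one kernel-verified Lean document; each statement's English description precedes it below -/
import Mathlib

section
/- Let R be a unital ring and X a set. The reduction-finite elements of the free R-ring R⟨X⟩ under a reduction system S form an R-subbimodule of R⟨X⟩. -/
/-- The free (non-unital) `R`-ring `R⟨X⟩` on a set `X`: the free left `R`-module on the
free semigroup of nonempty words over `X`, with convolution multiplication. -/
abbrev BFree (R X : Type) [Ring R] : Type := MonoidAlgebra R (FreeSemigroup X)

variable {R X : Type} [Ring R]

/-- A rule `σ = (W_σ, f_σ)` of a reduction system: a word `W_σ` together with an element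
`f_σ` of `R⟨X⟩` all of whose coefficients are central in `R`. -/
structure BRule (R X : Type) [Ring R] : Type where
  W : FreeSemigroup X
  f : BFree R X
  central : ∀ w, f.coeff w ∈ Set.center R

/-- The word `A W B`, where `A` and `B` are possibly empty words. -/
def glue (A : List X) (W : FreeSemigroup X) (B : List X) : FreeSemigroup X :=
  match A with
  | [] => ⟨W.head, W.tail ++ B⟩
  | x :: A' => ⟨x, A' ++ (W.head :: W.tail) ++ B⟩

noncomputable def ofx (x : X) : BFree R X := MonoidAlgebra.single (FreeSemigroup.of x) 1

/-- Left multiplication by a possibly empty word. -/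
noncomputable def lmulW (A : List X) (a : BFree R X) : BFree R X :=
  A.foldr (fun x acc => ofx x * acc) a

/-- Right multiplication by a possibly empty word. -/
noncomputable def rmulW (a : BFree R X) (B : List X) : BFree R X :=
  B.foldl (fun acc x => acc * ofx x) a

open Classical in
/-- The reduction `r_{AσB}` : the `R`-bimodule endomorphism of `R⟨X⟩` sending the word
`A W_σ B` to `A f_σ B` and fixing all other words. -/
noncomputable def applyRed (σ : BRule R X) (A B : List X) (a : BFree R X) : BFree R X :=
  a.coeff.sum fun w c =>
    if w = glue A σ.W B then c • lmulW A (rmulW σ.f B) else MonoidAlgebra.single w c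

/-- The data of a single reduction: a rule and two (possibly empty) flanking words. -/
abbrev BStep (R X : Type) [Ring R] : Type := BRule R X × List X × List X

noncomputable def applyStep (s : BStep R X) (a : BFree R X) : BFree R X :=
  applyRed s.1 s.2.1 s.2.2 a

/-- The iterated application of an infinite sequence of reductions. -/
noncomputable def applySeq (seq : ℕ → BStep R X) (a : BFree R X) : ℕ → BFree R X
  | 0 => a
  | n + 1 => applyStep (seq n) (applySeq seq a n)

/-- The reduction `r_{AσB}` acts trivially on `a` if the coefficient of `A W_σ B`
in `a` is zero. -/
def ActsTrivially (s : BStep R X) (a : BFree R X) : Prop :=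
  a.coeff (glue s.2.1 s.1.W s.2.2) = 0

/-- `a` is reduction-finite under the reduction system `S` if for every infinite sequence
of reductions from `S`, all but finitely many act trivially along the orbit of `a`. -/
def ReductionFinite (S : Set (BRule R X)) (a : BFree R X) : Prop :=
  ∀ seq : ℕ → BStep R X, (∀ n, (seq n).1 ∈ S) →
    ∃ N, ∀ n ≥ N, ActsTrivially (seq n) (applySeq seq a n)

/-- `a` is irreducible under `S` if it involves no word of the form `A W_σ B`. -/
def BIrreducible (S : Set (BRule R X)) (a : BFree R X) : Prop :=
  ∀ σ ∈ S, ∀ A B : List X, a.coeff (glue A σ.W B) = 0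

/-- The result of applying a finite sequence of reductions. -/
noncomputable def applyList (L : List (BStep R X)) (a : BFree R X) : BFree R X :=
  L.foldl (fun b s => applyStep s b) a

/-- A finite sequence of reductions from `S` is final on `a` if applying it to `a`
yields an irreducible element. -/
def FinalOn (S : Set (BRule R X)) (L : List (BStep R X)) (a : BFree R X) : Prop :=
  (∀ s ∈ L, s.1 ∈ S) ∧ BIrreducible S (applyList L a)

/-- `a` is reduction-unique if it is reduction-finite and its images under all final
sequences of reductions coincide. -/
def ReductionUnique (S : Set (BRule R X)) (a : BFree R X) : Prop :=
  ReductionFinite S a ∧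
    ∀ L L' : List (BStep R X), FinalOn S L a → FinalOn S L' a →
      applyList L a = applyList L' a

/-!
Each reduction `r_{AσB}` is an `R`-bimodule endomorphism of `R⟨X⟩`: it sends a word `w` to a
fixed element `e_w`, extended left-linearly, and it is also right-linear because `f_σ`, hence
every `e_w`, has central coefficients. So the orbit of `a + b`, `r a` or `a r` under a sequence
of reductions is the sum, resp. scalar multiple, of the orbits of `a` and `b`, and a coefficient
that eventually vanishes along the orbits of `a` and `b` eventually vanishes along it too.
-/

open MulOpposite

namespace MonoidAlgebra

variable {k G : Type*} [Semiring k]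

theorem coeff_mul_mem_center [Mul G] {a b : MonoidAlgebra k G}
    (ha : ∀ w, a.coeff w ∈ Set.center k) (hb : ∀ w, b.coeff w ∈ Set.center k) (w : G) :
    (a * b).coeff w ∈ Set.center k := by
  classical
  rw [coeff_mul]
  refine sum_mem (S := Subsemiring.center k) fun i _ => sum_mem fun j _ => ?_
  dsimp only
  split_ifs
  · exact mul_mem (ha i) (hb j)
  · exact zero_mem _

theorem coeff_single_one_mem_center (g w : G) :
    (single g (1 : k)).coeff w ∈ Set.center k := by
  classical
  rw [coeff_single, Finsupp.single_apply]
  split_ifs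
  · exact Set.one_mem_center
  · exact Set.zero_mem_center

theorem op_smul_smul_of_coeff_mem_center {v : MonoidAlgebra k G}
    (hv : ∀ w, v.coeff w ∈ Set.center k) (c r : k) : op r • c • v = (c * r) • v := by
  ext w
  change c * v.coeff w * r = c * r * v.coeff w
  rw [mul_assoc, mul_assoc, ((Semigroup.mem_center_iff.mp (hv w)) r).symm]

end MonoidAlgebra

open MonoidAlgebra

variable {R X : Type} [Ring R]

theorem coeff_lmulW_mem_center (A : List X) {a : BFree R X}
    (ha : ∀ w, a.coeff w ∈ Set.center R) (w : FreeSemigroup X) :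
    (lmulW A a).coeff w ∈ Set.center R := by
  induction A generalizing w with
  | nil => exact ha w
  | cons x A ih => exact coeff_mul_mem_center (coeff_single_one_mem_center _) ih w

theorem coeff_rmulW_mem_center (B : List X) {a : BFree R X}
    (ha : ∀ w, a.coeff w ∈ Set.center R) (w : FreeSemigroup X) :
    (rmulW a B).coeff w ∈ Set.center R := by
  induction B generalizing a with
  | nil => exact ha w
  | cons x B ih => exact ih (coeff_mul_mem_center ha (coeff_single_one_mem_center _))

open Classical in
noncomputable def reductionImage (σ : BRule R X) (A B : List X) (w : FreeSemigroup X) :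
    BFree R X :=
  if w = glue A σ.W B then lmulW A (rmulW σ.f B) else single w 1

theorem coeff_reductionImage_mem_center (σ : BRule R X) (A B : List X)
    (w v : FreeSemigroup X) : (reductionImage σ A B w).coeff v ∈ Set.center R := by
  unfold reductionImage
  split_ifs
  · exact coeff_lmulW_mem_center A (coeff_rmulW_mem_center B σ.central) v
  · exact coeff_single_one_mem_center w v

theorem applyRed_eq_sum (σ : BRule R X) (A B : List X) (a : BFree R X) :
    applyRed σ A B a = a.coeff.sum fun w c => c • reductionImage σ A B w := by
  unfold applyRed reductionImage
  refine Finsupp.sum_congr fun w _ => ?_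
  split_ifs
  · rfl
  · rw [smul_single', mul_one]

theorem applyRed_add (σ : BRule R X) (A B : List X) (a b : BFree R X) :
    applyRed σ A B (a + b) = applyRed σ A B a + applyRed σ A B b := by
  simp only [applyRed_eq_sum, coeff_add]
  exact Finsupp.sum_add_index' (fun _ => zero_smul _ _) fun _ _ _ => add_smul _ _ _

theorem applyRed_smul (σ : BRule R X) (A B : List X) (r : R) (a : BFree R X) :
    applyRed σ A B (r • a) = r • applyRed σ A B a := by
  simp only [applyRed_eq_sum, coeff_smul]
  rw [Finsupp.sum_smul_index' (h := fun w c => c • reductionImage σ A B w) fun _ => zero_smul _ _,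
    Finsupp.smul_sum]
  simp only [smul_eq_mul, mul_smul]

theorem applyRed_op_smul (σ : BRule R X) (A B : List X) (r : R) (a : BFree R X) :
    applyRed σ A B (op r • a) = op r • applyRed σ A B a := by
  simp only [applyRed_eq_sum, coeff_smul]
  rw [Finsupp.sum_smul_index' (h := fun w c => c • reductionImage σ A B w) fun _ => zero_smul _ _,
    Finsupp.smul_sum]
  simp only [op_smul_eq_mul,
    op_smul_smul_of_coeff_mem_center (coeff_reductionImage_mem_center σ A B _)]

theorem applySeq_add (seq : ℕ → BStep R X) (a b : BFree R X) (n : ℕ) :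
    applySeq seq (a + b) n = applySeq seq a n + applySeq seq b n := by
  induction n with
  | zero => rfl
  | succ n ih => simp only [applySeq, ih, applyStep, applyRed_add]

theorem applySeq_map_of_commute {φ : BFree R X → BFree R X}
    (hφ : ∀ s b, applyStep s (φ b) = φ (applyStep s b)) (seq : ℕ → BStep R X)
    (a : BFree R X) (n : ℕ) : applySeq seq (φ a) n = φ (applySeq seq a n) := by
  induction n with
  | zero => rfl
  | succ n ih => rw [applySeq, ih, hφ]; rfl

theorem applySeq_smul (seq : ℕ → BStep R X) (r : R) (a : BFree R X) (n : ℕ) :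
    applySeq seq (r • a) n = r • applySeq seq a n :=
  applySeq_map_of_commute (φ := (r • ·)) (fun _ _ => applyRed_smul ..) seq a n

theorem applySeq_op_smul (seq : ℕ → BStep R X) (r : R) (a : BFree R X) (n : ℕ) :
    applySeq seq (op r • a) n = op r • applySeq seq a n :=
  applySeq_map_of_commute (φ := (op r • ·)) (fun _ _ => applyRed_op_smul ..) seq a n

theorem reductionFinite_zero (S : Set (BRule R X)) : ReductionFinite S (0 : BFree R X) := by
  intro seq _
  refine ⟨0, fun n _ => ?_⟩
  have h : applySeq seq (0 : BFree R X) n = 0 := by simpa using applySeq_smul seq 0 0 n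
  simp [ActsTrivially, h]

theorem ReductionFinite.of_coeff_eq_zero₂ {S : Set (BRule R X)} {a b c : BFree R X}
    (ha : ReductionFinite S a) (hb : ReductionFinite S b)
    (h : ∀ seq n w, (applySeq seq a n).coeff w = 0 → (applySeq seq b n).coeff w = 0 →
      (applySeq seq c n).coeff w = 0) :
    ReductionFinite S c := by
  intro seq hseq
  obtain ⟨Na, hNa⟩ := ha seq hseq
  obtain ⟨Nb, hNb⟩ := hb seq hseq
  exact ⟨max Na Nb, fun n hn =>
    h seq n _ (hNa n (le_of_max_le_left hn)) (hNb n (le_of_max_le_right hn))⟩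

theorem ReductionFinite.of_coeff_eq_zero {S : Set (BRule R X)} {a c : BFree R X}
    (ha : ReductionFinite S a)
    (h : ∀ seq n w, (applySeq seq a n).coeff w = 0 → (applySeq seq c n).coeff w = 0) :
    ReductionFinite S c :=
  ha.of_coeff_eq_zero₂ ha fun seq n w hw _ => h seq n w hw

/-- The reduction-finite elements of the free `R`-ring `R⟨X⟩` under a
reduction system `S` form an `R`-subbimodule of `R⟨X⟩`: they contain `0` and are closed
under addition and under the left and right `R`-actions. -/
theorem reductionFinite_subbimodule (R X : Type) [Ring R] (S : Set (BRule R X)) :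
    ReductionFinite S (0 : BFree R X) ∧
    (∀ a b : BFree R X, ReductionFinite S a → ReductionFinite S b →
      ReductionFinite S (a + b)) ∧
    (∀ (r : R) (a : BFree R X), ReductionFinite S a → ReductionFinite S (r • a)) ∧
    (∀ (r : R) (a : BFree R X), ReductionFinite S a →
      ReductionFinite S (MulOpposite.op r • a)) := ⟨reductionFinite_zero S,
    fun a b ha hb => ha.of_coeff_eq_zero₂ hb fun seq n w h₁ h₂ => by
      rw [applySeq_add, coeff_add, Finsupp.add_apply, h₁, h₂, add_zero],
    fun r a ha => ha.of_coeff_eq_zero fun seq n w h => by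
      rw [applySeq_smul, coeff_smul_apply, h, smul_zero],
    fun r a ha => ha.of_coeff_eq_zero fun seq n w h => by
      rw [applySeq_op_smul, coeff_smul_apply, h, smul_zero]⟩
end

section
/- Let R be a unital ring and X a set with a reduction system S on R⟨X⟩. The set of reduction-unique elements of R⟨X⟩ forms an R-subbimodule, and the map r_S assigning to each reduction-unique element its common image under all final sequences of reductions is an R-bimodule homomorphism into the module of irreducible elements. -/
variable {R X : Type} [Ring R]

/-! Every reduction is additive and commutes with both scalar actions of `R`, the right one
because the coefficients of `f_σ` are central. Given reduction-unique `a` and `b` and a sequence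
`L` final on `a + b`, extend `L` by reductions making it final on `a` and then on `b`; they fix
the irreducible image of `a + b`, so additivity of the extended sequence identifies that image
with `r_S a + r_S b`. Scalar multiples are handled the same way. -/

open MulOpposite

variable {S : Set (BRule R X)}

theorem coeff_mul_mem_center {b c : BFree R X} (hb : ∀ w, b.coeff w ∈ Set.center R)
    (hc : ∀ w, c.coeff w ∈ Set.center R) (w : FreeSemigroup X) :
    (b * c).coeff w ∈ Set.center R := by
  classical
  rw [MonoidAlgebra.coeff_mul]
  refine Subsemiring.sum_mem (Subsemiring.center R) fun x _ =>
    Subsemiring.sum_mem _ fun y _ => ?_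
  dsimp only
  split_ifs
  · exact Subsemiring.mul_mem _ (hb x) (hc y)
  · exact zero_mem _

theorem coeff_ofx_mem_center (x : X) (w : FreeSemigroup X) :
    (ofx x : BFree R X).coeff w ∈ Set.center R := by
  classical
  rw [ofx, MonoidAlgebra.coeff_single, Finsupp.single_apply]
  split_ifs
  · exact Set.one_mem_center
  · exact Set.zero_mem_center

theorem coeff_lmulW_rmulW_mem_center {b : BFree R X} (hb : ∀ w, b.coeff w ∈ Set.center R)
    (A B : List X) (w : FreeSemigroup X) :
    (lmulW A (rmulW b B)).coeff w ∈ Set.center R := by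
  induction A generalizing w with
  | cons x A ih => exact coeff_mul_mem_center (coeff_ofx_mem_center x) ih w
  | nil =>
    induction B generalizing b with
    | nil => exact hb w
    | cons x B ih => exact ih (coeff_mul_mem_center hb (coeff_ofx_mem_center x))

theorem op_smul_eq_smul_of_coeff_mem_center {b : BFree R X}
    (hb : ∀ w, b.coeff w ∈ Set.center R) (r : R) : op r • b = r • b := by
  ext w
  exact ((Semigroup.mem_center_iff.mp (hb w)) r).symm

theorem applyStep_add (s : BStep R X) (a b : BFree R X) :
    applyStep s (a + b) = applyStep s a + applyStep s b := by
  unfold applyStep applyRed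
  rw [MonoidAlgebra.coeff_add]
  refine Finsupp.sum_add_index' (fun w => ?_) fun w c₁ c₂ => ?_ <;>
    split_ifs <;> simp [add_smul, MonoidAlgebra.single_add]

theorem applyStep_smul (s : BStep R X) (r : R) (a : BFree R X) :
    applyStep s (r • a) = r • applyStep s a := by
  unfold applyStep applyRed
  rw [MonoidAlgebra.coeff_smul, Finsupp.sum_smul_index' fun w => by split_ifs <;> simp,
    Finsupp.smul_sum]
  refine Finsupp.sum_congr fun w _ => ?_
  split_ifs <;> simp [mul_smul, MonoidAlgebra.smul_single]

theorem applyStep_op_smul (s : BStep R X) (r : R) (a : BFree R X) :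
    applyStep s (op r • a) = op r • applyStep s a := by
  unfold applyStep applyRed
  rw [MonoidAlgebra.coeff_smul, Finsupp.sum_smul_index' fun w => by split_ifs <;> simp,
    Finsupp.smul_sum]
  refine Finsupp.sum_congr fun w _ => ?_
  split_ifs
  · rw [smul_comm, op_smul_eq_smul_of_coeff_mem_center
      (coeff_lmulW_rmulW_mem_center s.1.central _ _), smul_smul, op_smul_eq_mul]
  · simp [MonoidAlgebra.smul_single]

theorem applyStep_of_actsTrivially {s : BStep R X} {a : BFree R X} (h : ActsTrivially s a) :
    applyStep s a = a := by
  unfold applyStep applyRed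
  conv_rhs => rw [← a.sum_coeff_single]
  refine Finsupp.sum_congr fun w hw => if_neg ?_
  rintro rfl
  exact Finsupp.mem_support_iff.mp hw h

theorem applyList_append (L L' : List (BStep R X)) (a : BFree R X) :
    applyList (L ++ L') a = applyList L' (applyList L a) :=
  List.foldl_append

theorem applyList_range_map (seq : ℕ → BStep R X) (a : BFree R X) (n : ℕ) :
    applyList ((List.range n).map seq) a = applySeq seq a n := by
  induction n with
  | zero => rfl
  | succ n ih => rw [List.range_succ, List.map_append, applyList_append, ih]; rfl

theorem applySeq_cons (s : BStep R X) (seq : ℕ → BStep R X) (a : BFree R X) (n : ℕ) :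
    applySeq (Stream'.cons s seq) a (n + 1) = applySeq seq (applyStep s a) n := by
  induction n with
  | zero => rfl
  | succ n ih => exact congrArg (applyStep (seq n)) ih

theorem applyList_of_irreducible {a : BFree R X} (ha : BIrreducible S a)
    {L : List (BStep R X)} (hL : ∀ s ∈ L, s.1 ∈ S) : applyList L a = a := by
  induction L with
  | nil => rfl
  | cons s L ih =>
    rw [← List.singleton_append, applyList_append,
      show applyList [s] a = a from
        applyStep_of_actsTrivially (ha s.1 (hL s List.mem_cons_self) _ _)]
    exact ih fun t ht => hL t (List.mem_cons_of_mem s ht)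

theorem FinalOn.applyList_append {L L' : List (BStep R X)} {a : BFree R X}
    (h : FinalOn S L a) (hL' : ∀ s ∈ L ++ L', s.1 ∈ S) :
    applyList (L ++ L') a = applyList L a := by
  rw [_root_.applyList_append,
    applyList_of_irreducible h.2 fun s hs => hL' s (List.mem_append_right L hs)]

theorem FinalOn.append {L L' : List (BStep R X)} {a : BFree R X}
    (h : FinalOn S L a) (hL' : ∀ s ∈ L ++ L', s.1 ∈ S) : FinalOn S (L ++ L') a :=
  ⟨hL', by rw [h.applyList_append hL']; exact h.2⟩

theorem reductionFinite_applyStep {a : BFree R X} (ha : ReductionFinite S a)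
    {s : BStep R X} (hs : s.1 ∈ S) : ReductionFinite S (applyStep s a) := by
  intro seq hseq
  obtain ⟨N, hN⟩ := ha (Stream'.cons s seq) fun | 0 => hs | n + 1 => hseq n
  refine ⟨N, fun n hn => ?_⟩
  have h := hN (n + 1) (by omega)
  rwa [ActsTrivially, applySeq_cons] at h

theorem reductionFinite_applyList {a : BFree R X} (ha : ReductionFinite S a)
    {L : List (BStep R X)} (hL : ∀ s ∈ L, s.1 ∈ S) : ReductionFinite S (applyList L a) := by
  induction L generalizing a with
  | nil => exact ha
  | cons s L ih =>
    exact ih (reductionFinite_applyStep ha (hL s List.mem_cons_self))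
      fun t ht => hL t (List.mem_cons_of_mem s ht)

theorem applySeq_iterate (next : BFree R X → BStep R X) (a : BFree R X) (n : ℕ) :
    applySeq (fun k => next ((fun b => applyStep (next b) b)^[k] a)) a n =
      (fun b => applyStep (next b) b)^[n] a := by
  induction n with
  | zero => rfl
  | succ n ih =>
    show applyStep _ (applySeq _ a n) = _
    rw [ih, Function.iterate_succ_apply']

/-- Reducing greedily at a word that actually occurs must stop, by reduction-finiteness. -/
theorem ReductionFinite.exists_finalOn {a : BFree R X} (ha : ReductionFinite S a) :
    ∃ L, FinalOn S L a := by
  by_contra! hfinal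
  have hred : ¬ BIrreducible S a := fun h => hfinal [] ⟨by simp, h⟩
  obtain ⟨σ₀, hσ₀, -⟩ : ∃ σ ∈ S, ∃ A B, a.coeff (glue A σ.W B) ≠ 0 := by
    simpa [BIrreducible] using hred
  have hstep : ∀ b : BFree R X, ∃ s : BStep R X,
      s.1 ∈ S ∧ (¬ BIrreducible S b → ¬ ActsTrivially s b) := by
    intro b
    by_cases hb : BIrreducible S b
    · exact ⟨(σ₀, [], []), hσ₀, absurd hb⟩
    · obtain ⟨σ, hσ, A, B, hne⟩ : ∃ σ ∈ S, ∃ A B, b.coeff (glue A σ.W B) ≠ 0 := by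
        simpa [BIrreducible] using hb
      exact ⟨(σ, A, B), hσ, fun _ => hne⟩
  choose next hnextS hnext using hstep
  set step : BFree R X → BFree R X := fun b => applyStep (next b) b
  set seq : ℕ → BStep R X := fun k => next (step^[k] a)
  obtain ⟨N, hN⟩ := ha seq fun k => hnextS _
  refine hnext (step^[N] a) (fun hirr => hfinal ((List.range N).map seq) ⟨?_, ?_⟩) ?_
  · simp only [List.mem_map]
    rintro _ ⟨k, -, rfl⟩
    exact hnextS _
  · rwa [applyList_range_map, applySeq_iterate]
  · simpa only [seq, step, applySeq_iterate] using hN N le_rfl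

theorem ReductionFinite.exists_finalOn_append {a : BFree R X} (ha : ReductionFinite S a)
    {L : List (BStep R X)} (hL : ∀ s ∈ L, s.1 ∈ S) : ∃ L', FinalOn S (L ++ L') a := by
  obtain ⟨L', hL', hirr⟩ := (reductionFinite_applyList ha hL).exists_finalOn
  refine ⟨L', fun s hs => ?_, by rwa [applyList_append]⟩
  rcases List.mem_append.mp hs with hs | hs
  exacts [hL s hs, hL' s hs]

/-- The scalar actions are treated as binary operations ignoring their second argument. -/
structure CommutesWithReductions (φ : BFree R X → BFree R X → BFree R X) : Prop where
  applyStep_eq : ∀ s a b, applyStep s (φ a b) = φ (applyStep s a) (applyStep s b)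
  coeff_eq_zero : ∀ a b w, a.coeff w = 0 → b.coeff w = 0 → (φ a b).coeff w = 0

namespace CommutesWithReductions

variable {φ : BFree R X → BFree R X → BFree R X}

theorem applyList_eq (hφ : CommutesWithReductions φ) (L : List (BStep R X))
    (a b : BFree R X) :
    applyList L (φ a b) = φ (applyList L a) (applyList L b) := by
  induction L generalizing a b with
  | nil => rfl
  | cons s L ih => exact (congrArg (applyList L) (hφ.applyStep_eq s a b)).trans (ih _ _)

theorem reductionFinite (hφ : CommutesWithReductions φ) {a b : BFree R X}
    (ha : ReductionFinite S a) (hb : ReductionFinite S b) : ReductionFinite S (φ a b) := by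
  intro seq hseq
  obtain ⟨Na, hNa⟩ := ha seq hseq
  obtain ⟨Nb, hNb⟩ := hb seq hseq
  refine ⟨max Na Nb, fun n hn => ?_⟩
  rw [ActsTrivially, ← applyList_range_map, hφ.applyList_eq, applyList_range_map,
    applyList_range_map]
  exact hφ.coeff_eq_zero _ _ _ (hNa n (le_of_max_le_left hn)) (hNb n (le_of_max_le_right hn))

/-- Extending `L` by reductions that finalize first `a`, then `b`, gives one sequence final on
`a`, on `b` and on `φ a b` at once. -/
theorem applyList_eq_of_finalOn (hφ : CommutesWithReductions φ) {a b : BFree R X}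
    (ha : ReductionUnique S a) (hb : ReductionUnique S b) {L La Lb : List (BStep R X)}
    (hL : FinalOn S L (φ a b)) (hLa : FinalOn S La a) (hLb : FinalOn S Lb b) :
    applyList L (φ a b) = φ (applyList La a) (applyList Lb b) := by
  obtain ⟨L₁, hL₁⟩ := ha.1.exists_finalOn_append hL.1
  obtain ⟨L₂, hL₂⟩ := hb.1.exists_finalOn_append hL₁.1
  have hMa : FinalOn S (L ++ L₁ ++ L₂) a := hL₁.append hL₂.1
  calc applyList L (φ a b) = applyList (L ++ (L₁ ++ L₂)) (φ a b) :=
        (hL.applyList_append (by rw [← List.append_assoc]; exact hL₂.1)).symm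
    _ = φ (applyList (L ++ L₁ ++ L₂) a) (applyList (L ++ L₁ ++ L₂) b) := by
        rw [← List.append_assoc, hφ.applyList_eq]
    _ = φ (applyList La a) (applyList Lb b) := by rw [ha.2 _ _ hMa hLa, hb.2 _ _ hL₂ hLb]

theorem reductionUnique (hφ : CommutesWithReductions φ) {a b : BFree R X}
    (ha : ReductionUnique S a) (hb : ReductionUnique S b) : ReductionUnique S (φ a b) := by
  obtain ⟨La, hLa⟩ := ha.1.exists_finalOn
  obtain ⟨Lb, hLb⟩ := hb.1.exists_finalOn
  refine ⟨hφ.reductionFinite ha.1 hb.1, fun L L' hL hL' => ?_⟩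
  rw [hφ.applyList_eq_of_finalOn ha hb hL hLa hLb,
    hφ.applyList_eq_of_finalOn ha hb hL' hLa hLb]

end CommutesWithReductions

theorem commutesWithReductions_add : CommutesWithReductions (R := R) (X := X) (· + ·) where
  applyStep_eq := applyStep_add
  coeff_eq_zero a b w ha hb := by
    rw [MonoidAlgebra.coeff_add, Finsupp.add_apply, ha, hb, add_zero]

theorem commutesWithReductions_smul (r : R) :
    CommutesWithReductions (R := R) (X := X) fun a _ => r • a where
  applyStep_eq s a _ := applyStep_smul s r a
  coeff_eq_zero a _ w ha _ := by rw [MonoidAlgebra.coeff_smul_apply, ha, smul_zero]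

theorem commutesWithReductions_op_smul (r : R) :
    CommutesWithReductions (R := R) (X := X) fun a _ => op r • a where
  applyStep_eq s a _ := applyStep_op_smul s r a
  coeff_eq_zero a _ w ha _ := by rw [MonoidAlgebra.coeff_smul_apply, ha, smul_zero]

theorem irreducible_zero : BIrreducible S (0 : BFree R X) :=
  fun _ _ _ _ => rfl

theorem reductionUnique_zero : ReductionUnique S (0 : BFree R X) := by
  refine ⟨fun seq hseq => ⟨0, fun n _ => ?_⟩, fun L L' hL hL' => ?_⟩
  · rw [ActsTrivially, ← applyList_range_map,
      applyList_of_irreducible (S := S) irreducible_zero (by simp [hseq])]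
    rfl
  · rw [applyList_of_irreducible irreducible_zero hL.1,
      applyList_of_irreducible irreducible_zero hL'.1]

open Classical in
/-- The map `r_S`: the image of `a` under some final sequence of reductions (`0` if there is
none). -/
noncomputable def reducedForm (S : Set (BRule R X)) (a : BFree R X) : BFree R X :=
  if h : ∃ L, FinalOn S L a then applyList h.choose a else 0

theorem applyList_eq_reducedForm {a : BFree R X} (ha : ReductionUnique S a)
    {L : List (BStep R X)} (hL : FinalOn S L a) : applyList L a = reducedForm S a := by
  have h : ∃ L, FinalOn S L a := ⟨L, hL⟩
  rw [reducedForm, dif_pos h]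
  exact ha.2 L _ hL h.choose_spec

theorem irreducible_reducedForm {a : BFree R X} (ha : ReductionFinite S a) :
    BIrreducible S (reducedForm S a) := by
  have h := ha.exists_finalOn
  rw [reducedForm, dif_pos h]
  exact h.choose_spec.2

theorem CommutesWithReductions.reducedForm_eq {φ : BFree R X → BFree R X → BFree R X}
    (hφ : CommutesWithReductions φ) {a b : BFree R X} (ha : ReductionUnique S a)
    (hb : ReductionUnique S b) :
    reducedForm S (φ a b) = φ (reducedForm S a) (reducedForm S b) := by
  obtain ⟨L, hL⟩ := (hφ.reductionFinite ha.1 hb.1).exists_finalOn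
  obtain ⟨La, hLa⟩ := ha.1.exists_finalOn
  obtain ⟨Lb, hLb⟩ := hb.1.exists_finalOn
  rw [← applyList_eq_reducedForm (hφ.reductionUnique ha hb) hL,
    ← applyList_eq_reducedForm ha hLa, ← applyList_eq_reducedForm hb hLb]
  exact hφ.applyList_eq_of_finalOn ha hb hL hLa hLb

/-- The set of reduction-unique elements of `R⟨X⟩` forms an
`R`-subbimodule, and the map `r_S`, assigning to each reduction-unique element its common
image under all final sequences of reductions, is an `R`-bimodule homomorphism into the
module of irreducible elements. -/
theorem reductionUnique_subbimodule_and_rS (R X : Type) [Ring R] (S : Set (BRule R X)) :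
    (ReductionUnique S (0 : BFree R X) ∧
      (∀ a b : BFree R X, ReductionUnique S a → ReductionUnique S b →
        ReductionUnique S (a + b)) ∧
      (∀ (r : R) (a : BFree R X), ReductionUnique S a → ReductionUnique S (r • a)) ∧
      (∀ (r : R) (a : BFree R X), ReductionUnique S a →
        ReductionUnique S (MulOpposite.op r • a))) ∧
    ∃ rS : BFree R X → BFree R X,
      (∀ a : BFree R X, ReductionUnique S a →
        ∀ L : List (BStep R X), FinalOn S L a → applyList L a = rS a) ∧
      (∀ a : BFree R X, ReductionUnique S a → BIrreducible S (rS a)) ∧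
      (∀ a b : BFree R X, ReductionUnique S a → ReductionUnique S b →
        rS (a + b) = rS a + rS b) ∧
      (∀ (r : R) (a : BFree R X), ReductionUnique S a → rS (r • a) = r • rS a) ∧
      (∀ (r : R) (a : BFree R X), ReductionUnique S a →
        rS (MulOpposite.op r • a) = MulOpposite.op r • rS a) :=
  ⟨⟨reductionUnique_zero,
      fun _ _ ha hb => commutesWithReductions_add.reductionUnique ha hb,
      fun r _ ha => (commutesWithReductions_smul r).reductionUnique ha ha,
      fun r _ ha => (commutesWithReductions_op_smul r).reductionUnique ha ha⟩,
    reducedForm S,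
    fun _ ha _ hL => applyList_eq_reducedForm ha hL,
    fun _ ha => irreducible_reducedForm ha.1,
    fun _ _ ha hb => commutesWithReductions_add.reducedForm_eq ha hb,
    fun r _ ha => (commutesWithReductions_smul r).reducedForm_eq ha ha,
    fun r _ ha => (commutesWithReductions_op_smul r).reducedForm_eq ha ha⟩
end

section
/- For a field K, the weighted Leavitt path algebra of the weighted graph with one vertex and n+k loops each of weight n is isomorphic as a K-algebra to the Leavitt algebra L_K(n, n+k). -/
/-!
Both algebras are presented by generators in bijection, `(y_α)_i ↔ y_{iα}` and
`(y_α)_i* ↔ x_{αi}`, and this bijection carries relation (3) of the rose,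
`Σ_α α_i α_j* = δ_{ij}`, to `Y X = I_n` and relation (4), `Σ_i α_i* β_i = δ_{αβ}`, to
`X Y = I_{n+k}`. Hence the two presentations coincide after relabelling the generators.
-/

/-- Generators of the Leavitt algebra `L_K(n, n+k)`: the entries `y_{ij}` of an
`n × (n+k)` matrix `Y` and the entries `x_{ji}` of an `(n+k) × n` matrix `X`. -/
inductive LeavittGen (n k : ℕ) : Type
  | y : Fin n → Fin (n + k) → LeavittGen n k
  | x : Fin (n + k) → Fin n → LeavittGen n k

/-- The defining relations of `L_K(n, n+k)`: `Y X = I_n` and `X Y = I_{n+k}`. -/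
inductive LeavittRel (K : Type) [CommRing K] (n k : ℕ) :
    FreeAlgebra K (LeavittGen n k) → FreeAlgebra K (LeavittGen n k) → Prop
  | YX (i i' : Fin n) :
      LeavittRel K n k
        (∑ j : Fin (n + k),
          FreeAlgebra.ι K (LeavittGen.y i j) * FreeAlgebra.ι K (LeavittGen.x j i'))
        (if i = i' then 1 else 0)
  | XY (j j' : Fin (n + k)) :
      LeavittRel K n k
        (∑ i : Fin n,
          FreeAlgebra.ι K (LeavittGen.x j i) * FreeAlgebra.ι K (LeavittGen.y i j'))
        (if j = j' then 1 else 0)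

/-- The Leavitt algebra `L_K(n, n+k)`. -/
abbrev Leavitt (K : Type) [CommRing K] (n k : ℕ) : Type := RingQuot (LeavittRel K n k)

/-- The images of the generators in `L_K(n, n+k)`. -/
noncomputable def leavittGen (K : Type) [CommRing K] (n k : ℕ) (g : LeavittGen n k) :
    Leavitt K n k :=
  RingQuot.mkAlgHom K (LeavittRel K n k) (FreeAlgebra.ι K g)

/-- Generators of the weighted Leavitt path algebra of the weighted graph with one
vertex and `n+k` loops, each of weight `n`: the edges `(y_α)_i` and their ghosts
`(y_α)_i*` for `α ∈ Fin (n+k)`, `i ∈ Fin n`.  (Since the graph has a single vertex `v`,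
the vertex generator is the identity of the algebra.) -/
inductive RoseGen (n k : ℕ) : Type
  | e : Fin (n + k) → Fin n → RoseGen n k
  | star : Fin (n + k) → Fin n → RoseGen n k

/-- Relations (3) and (4) of the weighted Leavitt path algebra for the rose with
`n+k` loops of weight `n`:
`Σ_α α_i α_j* = δ_{ij} v` and `Σ_i α_i* β_i = δ_{αβ} v`, with `v = 1`. -/
inductive RoseRel (K : Type) [CommRing K] (n k : ℕ) :
    FreeAlgebra K (RoseGen n k) → FreeAlgebra K (RoseGen n k) → Prop
  | CK1 (i j : Fin n) :
      RoseRel K n k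
        (∑ α : Fin (n + k),
          FreeAlgebra.ι K (RoseGen.e α i) * FreeAlgebra.ι K (RoseGen.star α j))
        (if i = j then 1 else 0)
  | CK2 (α β : Fin (n + k)) :
      RoseRel K n k
        (∑ i : Fin n,
          FreeAlgebra.ι K (RoseGen.star α i) * FreeAlgebra.ι K (RoseGen.e β i))
        (if α = β then 1 else 0)

/-- The weighted Leavitt path algebra of the weighted graph with one vertex and `n+k`
loops, each of weight `n`. -/
abbrev WRose (K : Type) [CommRing K] (n k : ℕ) : Type := RingQuot (RoseRel K n k)

noncomputable def wroseGen (K : Type) [CommRing K] (n k : ℕ) (g : RoseGen n k) :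
    WRose K n k :=
  RingQuot.mkAlgHom K (RoseRel K n k) (FreeAlgebra.ι K g)

namespace FreeAlgebra

variable {R X Y : Type*} [CommSemiring R]

noncomputable def rename (f : X → Y) : FreeAlgebra R X →ₐ[R] FreeAlgebra R Y :=
  lift R (ι R ∘ f)

@[simp]
theorem rename_ι (f : X → Y) (x : X) : rename (R := R) f (ι R x) = ι R (f x) :=
  lift_ι_apply _ _

end FreeAlgebra

namespace RingQuot

open FreeAlgebra

variable {R X Y : Type*} [CommSemiring R]
  {r : FreeAlgebra R X → FreeAlgebra R X → Prop} {s : FreeAlgebra R Y → FreeAlgebra R Y → Prop}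

noncomputable def renameAlgHom (f : X → Y) (hf : ∀ ⦃a b⦄, r a b → s (rename f a) (rename f b)) :
    RingQuot r →ₐ[R] RingQuot s :=
  liftAlgHom R ⟨(mkAlgHom R s).comp (rename f), fun ⦃_ _⦄ h => mkAlgHom_rel R (hf h)⟩

@[simp]
theorem renameAlgHom_mkAlgHom_ι (f : X → Y)
    (hf : ∀ ⦃a b⦄, r a b → s (rename f a) (rename f b)) (x : X) :
    renameAlgHom f hf (mkAlgHom R r (ι R x)) = mkAlgHom R s (ι R (f x)) :=
  (liftAlgHom_mkAlgHom_apply _ _ _ _).trans (congrArg _ (rename_ι f x))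

noncomputable def renameAlgEquiv (e : X ≃ Y)
    (he : ∀ ⦃a b⦄, r a b → s (rename e a) (rename e b))
    (he' : ∀ ⦃a b⦄, s a b → r (rename e.symm a) (rename e.symm b)) :
    RingQuot r ≃ₐ[R] RingQuot s :=
  AlgEquiv.ofAlgHom (renameAlgHom e he) (renameAlgHom e.symm he')
    (ringQuot_ext' _ _ _ <| FreeAlgebra.hom_ext <| funext fun y => by simp)
    (ringQuot_ext' _ _ _ <| FreeAlgebra.hom_ext <| funext fun x => by simp)

@[simp]
theorem renameAlgEquiv_mkAlgHom_ι (e : X ≃ Y)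
    (he : ∀ ⦃a b⦄, r a b → s (rename e a) (rename e b))
    (he' : ∀ ⦃a b⦄, s a b → r (rename e.symm a) (rename e.symm b)) (x : X) :
    renameAlgEquiv e he he' (mkAlgHom R r (ι R x)) = mkAlgHom R s (ι R (e x)) :=
  renameAlgHom_mkAlgHom_ι e he x

end RingQuot

def roseGenEquivLeavittGen (n k : ℕ) : RoseGen n k ≃ LeavittGen n k where
  toFun
    | .e α i => .y i α
    | .star α i => .x α i
  invFun
    | .y i α => .e α i
    | .x α i => .star α i
  left_inv g := by cases g <;> rfl
  right_inv g := by cases g <;> rfl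

section Relations

open FreeAlgebra

variable {K : Type} [CommRing K] {n k : ℕ}

theorem RoseRel.rename_leavittRel ⦃a b : FreeAlgebra K (RoseGen n k)⦄ (h : RoseRel K n k a b) :
    LeavittRel K n k (rename (roseGenEquivLeavittGen n k) a)
      (rename (roseGenEquivLeavittGen n k) b) := by
  cases h with
  | CK1 i j =>
    simp only [map_sum, map_mul, rename_ι, apply_ite (rename _), map_one, map_zero]
    exact LeavittRel.YX i j
  | CK2 α β =>
    simp only [map_sum, map_mul, rename_ι, apply_ite (rename _), map_one, map_zero]
    exact LeavittRel.XY α β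

theorem LeavittRel.rename_roseRel ⦃a b : FreeAlgebra K (LeavittGen n k)⦄
    (h : LeavittRel K n k a b) :
    RoseRel K n k (rename (roseGenEquivLeavittGen n k).symm a)
      (rename (roseGenEquivLeavittGen n k).symm b) := by
  cases h with
  | YX i j =>
    simp only [map_sum, map_mul, rename_ι, apply_ite (rename _), map_one, map_zero]
    exact RoseRel.CK1 i j
  | XY α β =>
    simp only [map_sum, map_mul, rename_ι, apply_ite (rename _), map_one, map_zero]
    exact RoseRel.CK2 α β

end Relations

theorem wrose_iso_leavitt_general (K : Type) [Field K] (n k : ℕ) :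
    ∃ φ : WRose K n k ≃ₐ[K] Leavitt K n k,
      (∀ (α : Fin (n + k)) (i : Fin n),
        φ (wroseGen K n k (RoseGen.e α i)) = leavittGen K n k (LeavittGen.y i α)) ∧
      (∀ (α : Fin (n + k)) (i : Fin n),
        φ (wroseGen K n k (RoseGen.star α i)) = leavittGen K n k (LeavittGen.x α i)) :=
  ⟨RingQuot.renameAlgEquiv _ RoseRel.rename_leavittRel LeavittRel.rename_roseRel,
    fun α i => RingQuot.renameAlgEquiv_mkAlgHom_ι _ _ _ (RoseGen.e α i),
    fun α i => RingQuot.renameAlgEquiv_mkAlgHom_ι _ _ _ (RoseGen.star α i)⟩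

/-- For a field `K`, the weighted Leavitt path algebra of the weighted
graph with one vertex and `n+k` loops each of weight `n` is isomorphic as a `K`-algebra
to the Leavitt algebra `L_K(n, n+k)`; the isomorphism identifies `(y_α)_i` with
`y_{iα}` and `(y_α)_i*` with `x_{αi}`. -/
theorem wrose_iso_leavitt (K : Type) [Field K] (n k : ℕ) (hn : 0 < n) :
    ∃ φ : WRose K n k ≃ₐ[K] Leavitt K n k,
      (∀ (α : Fin (n + k)) (i : Fin n),
        φ (wroseGen K n k (RoseGen.e α i)) = leavittGen K n k (LeavittGen.y i α)) ∧
      (∀ (α : Fin (n + k)) (i : Fin n),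
        φ (wroseGen K n k (RoseGen.star α i)) = leavittGen K n k (LeavittGen.x α i)) :=
  wrose_iso_leavitt_general K n k
end

section
/- For a field K and integers n ≥ 1, k ≥ 0, the assignment y_{1i} ↦ y_i, x_{i1} ↦ y_i* for 1 ≤ i ≤ k+1, y_{i,i+k} ↦ 1, x_{i+k,i} ↦ 1 for 2 ≤ i ≤ n, and all other generators to 0, induces a surjective K-algebra homomorphism L_K(n, n+k) → L_K(1, k+1). -/
/-!
A `K`-algebra map out of `L_K(n, n+k)` is the same as a pair of matrices `Y`, `X` over the target
with `Y X = 1` and `X Y = 1`. Over `L_K(1, k+1)` the block matrices `diag(Y, I_{n-1})` and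
`diag(X, I_{n-1})` built from its generator matrices are such a pair, and the resulting map is
surjective because its image contains every generator of `L_K(1, k+1)`.
-/

noncomputable section

namespace Leavitt

variable (K : Type) [CommRing K] (n k : ℕ)

def matY : Matrix (Fin n) (Fin (n + k)) (Leavitt K n k) :=
  fun i j => leavittGen K n k (.y i j)

def matX : Matrix (Fin (n + k)) (Fin n) (Leavitt K n k) :=
  fun j i => leavittGen K n k (.x j i)

theorem matY_mul_matX : matY K n k * matX K n k = 1 := by
  ext i i'
  simpa [matY, matX, Matrix.mul_apply, Matrix.one_apply, leavittGen, apply_ite] using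
    RingQuot.mkAlgHom_rel K (LeavittRel.YX (K := K) (n := n) (k := k) i i')

theorem matX_mul_matY : matX K n k * matY K n k = 1 := by
  ext j j'
  simpa [matY, matX, Matrix.mul_apply, Matrix.one_apply, leavittGen, apply_ite] using
    RingQuot.mkAlgHom_rel K (LeavittRel.XY (K := K) (n := n) (k := k) j j')

theorem adjoin_range_leavittGen : Algebra.adjoin K (Set.range (leavittGen K n k)) = ⊤ := by
  have : leavittGen K n k = RingQuot.mkAlgHom K (LeavittRel K n k) ∘ FreeAlgebra.ι K := rfl
  rw [this, Set.range_comp, Algebra.adjoin_image, FreeAlgebra.adjoin_range_ι,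
    Algebra.map_top, AlgHom.range_eq_top]
  exact RingQuot.mkAlgHom_surjective K _

variable {K n k} {A : Type*} [Semiring A] [Algebra K A]

theorem surjective_of_leavittGen_mem_range (f : A →ₐ[K] Leavitt K n k)
    (hf : ∀ g, leavittGen K n k g ∈ f.range) : Function.Surjective f := by
  rw [← AlgHom.range_eq_top, eq_top_iff, ← adjoin_range_leavittGen, Algebra.adjoin_le_iff]
  rintro _ ⟨g, rfl⟩
  exact hf g

variable (K)

def generatorImage (Y : Matrix (Fin n) (Fin (n + k)) A) (X : Matrix (Fin (n + k)) (Fin n) A) :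
    LeavittGen n k → A
  | .y i j => Y i j
  | .x j i => X j i

def lift (Y : Matrix (Fin n) (Fin (n + k)) A) (X : Matrix (Fin (n + k)) (Fin n) A)
    (hYX : Y * X = 1) (hXY : X * Y = 1) : Leavitt K n k →ₐ[K] A :=
  RingQuot.liftAlgHom K ⟨FreeAlgebra.lift K (generatorImage Y X), fun _ _ h => by
    cases h with
    | YX i i' => simpa [generatorImage, Matrix.mul_apply, Matrix.one_apply, apply_ite] using
        congrFun₂ hYX i i'
    | XY j j' => simpa [generatorImage, Matrix.mul_apply, Matrix.one_apply, apply_ite] using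
        congrFun₂ hXY j j'⟩

theorem lift_leavittGen (Y : Matrix (Fin n) (Fin (n + k)) A) (X : Matrix (Fin (n + k)) (Fin n) A)
    (hYX : Y * X = 1) (hXY : X * Y = 1) (g : LeavittGen n k) :
    lift K Y X hYX hXY (leavittGen K n k g) = generatorImage Y X g := by
  simp [lift, leavittGen]

end Leavitt

end

def finSplit {m a b : ℕ} (h : m = a + b) : Fin m ≃ Fin a ⊕ Fin b :=
  (finCongr h).trans finSumFinEquiv.symm

theorem finSplit_apply_of_lt {m a b : ℕ} (h : m = a + b) (i : Fin m) (hi : (i : ℕ) < a) :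
    finSplit h i = .inl ⟨i, hi⟩ := by
  have : finCongr h i = Fin.castAdd b ⟨i, hi⟩ := rfl
  simp only [finSplit, Equiv.trans_apply, this, finSumFinEquiv_symm_apply_castAdd]

theorem finSplit_apply_of_le {m a b : ℕ} (h : m = a + b) (i : Fin m) (hi : a ≤ (i : ℕ)) :
    finSplit h i = .inr ⟨i - a, by omega⟩ := by
  have : finCongr h i = Fin.natAdd a ⟨i - a, by omega⟩ := Fin.ext (by simp; omega)
  simp only [finSplit, Equiv.trans_apply, this, finSumFinEquiv_symm_apply_natAdd]

namespace Matrix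

variable {A : Type*} [Semiring A] {p n k : ℕ}

def padOne (h : p ≤ n) (M : Matrix (Fin p) (Fin (p + k)) A) : Matrix (Fin n) (Fin (n + k)) A :=
  (fromBlocks M 0 0 (1 : Matrix (Fin (n - p)) (Fin (n - p)) A)).submatrix
    (finSplit (by omega)) (finSplit (by omega))

theorem padOne_apply_of_lt (h : p ≤ n) (M : Matrix (Fin p) (Fin (p + k)) A) (i : Fin n)
    (j : Fin (n + k)) (hi : (i : ℕ) < p) (hj : (j : ℕ) < p + k) :
    padOne h M i j = M ⟨i, hi⟩ ⟨j, hj⟩ := by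
  simp [padOne, finSplit_apply_of_lt _ i hi, finSplit_apply_of_lt _ j hj]

theorem padOne_apply_add (h : p ≤ n) (M : Matrix (Fin p) (Fin (p + k)) A) (i : Fin n)
    (hi : p ≤ (i : ℕ)) : padOne h M i ⟨i + k, by omega⟩ = 1 := by
  rw [padOne, submatrix_apply, finSplit_apply_of_le _ i hi,
    finSplit_apply_of_le (a := p + k) _ ⟨i + k, _⟩ (by simp; omega), fromBlocks_apply₂₂]
  rw [one_apply, if_pos (Fin.ext (by simp; omega))]

theorem padOne_apply_eq_zero (h : p ≤ n) (M : Matrix (Fin p) (Fin (p + k)) A) (i : Fin n)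
    (j : Fin (n + k)) (h₁ : ¬((i : ℕ) < p ∧ (j : ℕ) < p + k))
    (h₂ : ¬(p ≤ (i : ℕ) ∧ (j : ℕ) = i + k)) :
    padOne h M i j = 0 := by
  rcases lt_or_ge (i : ℕ) p with hi | hi <;> rcases lt_or_ge (j : ℕ) (p + k) with hj | hj
  · exact absurd ⟨hi, hj⟩ h₁
  · simp [padOne, finSplit_apply_of_lt _ i hi, finSplit_apply_of_le _ j hj]
  · simp [padOne, finSplit_apply_of_le _ i hi, finSplit_apply_of_lt _ j hj]
  · rw [padOne, submatrix_apply, finSplit_apply_of_le _ i hi, finSplit_apply_of_le _ j hj,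
      fromBlocks_apply₂₂]
    exact one_apply_ne (by simp [Fin.ext_iff]; omega)

theorem padOne_mul_transpose_padOne (h : p ≤ n) {M : Matrix (Fin p) (Fin (p + k)) A}
    {N : Matrix (Fin (p + k)) (Fin p) A} (hMN : M * N = 1) :
    padOne h M * (padOne h Nᵀ)ᵀ = 1 := by
  simp [padOne, fromBlocks_transpose, fromBlocks_multiply, hMN, fromBlocks_one]

theorem transpose_padOne_mul_padOne (h : p ≤ n) {M : Matrix (Fin p) (Fin (p + k)) A}
    {N : Matrix (Fin (p + k)) (Fin p) A} (hNM : N * M = 1) :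
    (padOne h Nᵀ)ᵀ * padOne h M = 1 := by
  simp [padOne, fromBlocks_transpose, fromBlocks_multiply, hNM, fromBlocks_one]

end Matrix

/-- Indices are `0`-based: the generator `y_{1i}` of the paper is `y ⟨0⟩ j` with `j < k+1`, and
`y_{i,i+k}` with `2 ≤ i ≤ n` is `y i ⟨i+k⟩` with `1 ≤ i`. -/
theorem leavitt_surjection (K : Type) [Field K] (n k : ℕ) (hn : 0 < n) :
    ∃ f : Leavitt K n k →ₐ[K] Leavitt K 1 k,
      Function.Surjective f ∧
      (∀ (j : Fin (n + k)) (hj : (j : ℕ) < k + 1),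
        f (leavittGen K n k (LeavittGen.y ⟨0, hn⟩ j)) =
          leavittGen K 1 k (LeavittGen.y 0 ⟨(j : ℕ), by omega⟩)) ∧
      (∀ (j : Fin (n + k)) (hj : (j : ℕ) < k + 1),
        f (leavittGen K n k (LeavittGen.x j ⟨0, hn⟩)) =
          leavittGen K 1 k (LeavittGen.x ⟨(j : ℕ), by omega⟩ 0)) ∧
      (∀ (i : Fin n), 1 ≤ (i : ℕ) →
        f (leavittGen K n k (LeavittGen.y i ⟨(i : ℕ) + k, by omega⟩)) = 1) ∧
      (∀ (i : Fin n), 1 ≤ (i : ℕ) →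
        f (leavittGen K n k (LeavittGen.x ⟨(i : ℕ) + k, by omega⟩ i)) = 1) ∧
      (∀ (i : Fin n) (j : Fin (n + k)),
        ¬((i : ℕ) = 0 ∧ (j : ℕ) < k + 1) → ¬(1 ≤ (i : ℕ) ∧ (j : ℕ) = (i : ℕ) + k) →
          f (leavittGen K n k (LeavittGen.y i j)) = 0) ∧
      (∀ (i : Fin n) (j : Fin (n + k)),
        ¬((i : ℕ) = 0 ∧ (j : ℕ) < k + 1) → ¬(1 ≤ (i : ℕ) ∧ (j : ℕ) = (i : ℕ) + k) →
          f (leavittGen K n k (LeavittGen.x j i)) = 0) := by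
  open Leavitt Matrix in
  let f := lift K (padOne hn (matY K 1 k)) (padOne hn (matX K 1 k)ᵀ)ᵀ
    (padOne_mul_transpose_padOne hn (matY_mul_matX K 1 k))
    (transpose_padOne_mul_padOne hn (matX_mul_matY K 1 k))
  have hy (i j) : f (leavittGen K n k (.y i j)) = padOne hn (matY K 1 k) i j :=
    lift_leavittGen K _ _ _ _ _
  have hx (i j) : f (leavittGen K n k (.x j i)) = padOne hn (matX K 1 k)ᵀ i j :=
    lift_leavittGen K _ _ _ _ _
  have hy₀ (j : Fin (n + k)) (hj : (j : ℕ) < k + 1) :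
      f (leavittGen K n k (.y ⟨0, hn⟩ j)) = leavittGen K 1 k (.y 0 ⟨j, by omega⟩) :=
    (hy _ _).trans (padOne_apply_of_lt _ _ _ _ _ (by omega))
  have hx₀ (j : Fin (n + k)) (hj : (j : ℕ) < k + 1) :
      f (leavittGen K n k (.x j ⟨0, hn⟩)) = leavittGen K 1 k (.x ⟨j, by omega⟩ 0) :=
    (hx _ _).trans (padOne_apply_of_lt _ _ _ _ _ (by omega))
  refine ⟨f, surjective_of_leavittGen_mem_range f ?_, hy₀, hx₀,
    fun i hi => (hy _ _).trans (padOne_apply_add _ _ _ hi),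
    fun i hi => (hx _ _).trans (padOne_apply_add _ _ _ hi),
    fun i j h₁ h₂ => (hy _ _).trans (padOne_apply_eq_zero _ _ _ _ (by omega) (by omega)),
    fun i j h₁ h₂ => (hx _ _).trans (padOne_apply_eq_zero _ _ _ _ (by omega) (by omega))⟩
  rintro (⟨i, j⟩ | ⟨j, i⟩) <;> obtain rfl := Subsingleton.elim i 0
  · exact ⟨_, hy₀ ⟨j, by omega⟩ (j.isLt.trans_eq (Nat.add_comm 1 k))⟩
  · exact ⟨_, hx₀ ⟨j, by omega⟩ (j.isLt.trans_eq (Nat.add_comm 1 k))⟩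
end

section
/- The weighted Leavitt path algebra over a ring R of a weighted graph consisting of one vertex and one structured edge of weight n is isomorphic to the Leavitt path algebra over R of the unweighted graph with one vertex and n loops. -/
/-!
Renaming the generators by `α_i ↦ e_i*`, `α_i* ↦ e_i` is an isomorphism of free unital rings
which carries the relations `α_i α_j* = δ_ij` and `Σ α_i* α_i = 1` exactly onto
`e_i* e_j = δ_ij` and `Σ e_i e_i* = 1`; hence it identifies the two defining ideals and descends
to the quotients.
-/

/-- The free unital `R`-ring on a set `X` (for a possibly noncommutative ring `R`). -/
abbrev FreeURng (R X : Type) [Ring R] : Type := MonoidAlgebra R (FreeMonoid X)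

noncomputable def ofu {R X : Type} [Ring R] (x : X) : FreeURng R X :=
  MonoidAlgebra.single (FreeMonoid.of x) 1

/-- Generators of the weighted Leavitt path algebra of the weighted graph with one
vertex and one structured edge `α` of weight `n`: the edges `α_1, …, α_n` and the ghost
edges `α_1*, …, α_n*` (the unique vertex is the identity). -/
inductive WR1Gen (n : ℕ) : Type
  | a : Fin n → WR1Gen n
  | astar : Fin n → WR1Gen n

open Classical in
/-- Relations of `L_R(E, ω)` for one vertex and one structured edge of weight `n`:
`α_i α_j* = δ_{ij} 1` and `Σ_i α_i* α_i = 1`. -/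
noncomputable def WR1Rels (R : Type) [Ring R] (n : ℕ) : Set (FreeURng R (WR1Gen n)) :=
  {z | ∃ i j : Fin n,
      z = ofu (WR1Gen.a i) * ofu (WR1Gen.astar j) - if i = j then 1 else 0} ∪
  {∑ i : Fin n, ofu (WR1Gen.astar i) * ofu (WR1Gen.a i) - 1}

/-- The weighted Leavitt path algebra of the rose with one structured edge of weight `n`. -/
abbrev WR1 (R : Type) [Ring R] (n : ℕ) : Type :=
  (TwoSidedIdeal.span (WR1Rels R n)).ringCon.Quotient

noncomputable def wr1Gen (R : Type) [Ring R] (n : ℕ) (g : WR1Gen n) : WR1 R n :=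
  (TwoSidedIdeal.span (WR1Rels R n)).ringCon.toQuotient (ofu g)

/-- Generators of the Leavitt path algebra of the unweighted rose with `n` loops
`e_1, …, e_n`: the loops and their ghosts. -/
inductive RoseNGen (n : ℕ) : Type
  | e : Fin n → RoseNGen n
  | estar : Fin n → RoseNGen n

open Classical in
/-- Relations of the Leavitt path algebra of the rose with `n` loops:
`e_i* e_j = δ_{ij} 1` and `Σ_i e_i e_i* = 1`. -/
noncomputable def RoseNRels (R : Type) [Ring R] (n : ℕ) : Set (FreeURng R (RoseNGen n)) :=
  {z | ∃ i j : Fin n,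
      z = ofu (RoseNGen.estar i) * ofu (RoseNGen.e j) - if i = j then 1 else 0} ∪
  {∑ i : Fin n, ofu (RoseNGen.e i) * ofu (RoseNGen.estar i) - 1}

/-- The Leavitt path algebra of the unweighted rose with `n` loops. -/
abbrev RoseN (R : Type) [Ring R] (n : ℕ) : Type :=
  (TwoSidedIdeal.span (RoseNRels R n)).ringCon.Quotient

noncomputable def roseNGen (R : Type) [Ring R] (n : ℕ) (g : RoseNGen n) : RoseN R n :=
  (TwoSidedIdeal.span (RoseNRels R n)).ringCon.toQuotient (ofu g)

namespace FreeURng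

variable (R : Type) [Ring R] {X Y : Type}

noncomputable def renameEquiv (e : X ≃ Y) : FreeURng R X ≃+* FreeURng R Y :=
  MonoidAlgebra.mapDomainRingEquiv R (FreeMonoid.freeMonoidCongr e)

@[simp]
lemma renameEquiv_ofu (e : X ≃ Y) (x : X) : renameEquiv R e (ofu x) = ofu (e x) := by
  simp [renameEquiv, ofu, MonoidAlgebra.mapDomainRingEquiv_single, FreeMonoid.freeMonoidCongr]

@[simp]
lemma renameEquiv_symm_ofu (e : X ≃ Y) (y : Y) :
    (renameEquiv R e).symm (ofu y) = ofu (e.symm y) := by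
  rw [RingEquiv.symm_apply_eq, renameEquiv_ofu, Equiv.apply_symm_apply]

end FreeURng

namespace TwoSidedIdeal

variable {A B : Type} [Ring A] [Ring B]

lemma comap_span_eq_span_of_mapsTo (e : A ≃+* B) {S : Set A} {T : Set B}
    (hST : Set.MapsTo e S T) (hTS : Set.MapsTo e.symm T S) : (span T).comap e = span S := by
  refine le_antisymm (fun x hx => ?_) (span_le.mpr fun s hs => ?_)
  · have hspan : span T ≤ (span S).comap e.symm :=
      span_le.mpr fun t ht => (mem_comap _).mpr (subset_span (hTS ht))
    simpa using (mem_comap _).mp (hspan ((mem_comap _).mp hx))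
  · exact (mem_comap _).mpr (subset_span (hST hs))

noncomputable def quotientSpanEquiv (e : A ≃+* B) {S : Set A} {T : Set B}
    (hST : Set.MapsTo e S T) (hTS : Set.MapsTo e.symm T S) :
    (span S).ringCon.Quotient ≃+* (span T).ringCon.Quotient :=
  RingCon.congr e (congrArg ringCon (comap_span_eq_span_of_mapsTo e hST hTS)).symm

@[simp]
lemma quotientSpanEquiv_mk (e : A ≃+* B) {S : Set A} {T : Set B}
    (hST : Set.MapsTo e S T) (hTS : Set.MapsTo e.symm T S) (a : A) :
    quotientSpanEquiv e hST hTS ((span S).ringCon.toQuotient a) =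
      (span T).ringCon.toQuotient (e a) :=
  rfl

end TwoSidedIdeal

def WR1Gen.equivRoseNGen (n : ℕ) : WR1Gen n ≃ RoseNGen n where
  toFun
    | .a i => .estar i
    | .astar i => .e i
  invFun
    | .e i => .astar i
    | .estar i => .a i
  left_inv g := by cases g <;> rfl
  right_inv g := by cases g <;> rfl

section

variable (R : Type) [Ring R] (n : ℕ)

lemma mapsTo_renameEquiv_wr1Rels :
    Set.MapsTo (FreeURng.renameEquiv R (WR1Gen.equivRoseNGen n)) (WR1Rels R n)
      (RoseNRels R n) := by
  rintro z (⟨i, j, rfl⟩ | rfl)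
  · refine Or.inl ⟨i, j, ?_⟩
    split_ifs <;> simp [WR1Gen.equivRoseNGen]
  · exact Or.inr (by simp [WR1Gen.equivRoseNGen])

lemma mapsTo_renameEquiv_symm_roseNRels :
    Set.MapsTo (FreeURng.renameEquiv R (WR1Gen.equivRoseNGen n)).symm (RoseNRels R n)
      (WR1Rels R n) := by
  rintro z (⟨i, j, rfl⟩ | rfl)
  · refine Or.inl ⟨i, j, ?_⟩
    split_ifs <;> simp [WR1Gen.equivRoseNGen]
  · exact Or.inr (by simp [WR1Gen.equivRoseNGen])

end

/-- Over a ring `R`, the weighted Leavitt path algebra of the weighted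
graph with one vertex and one structured edge of weight `n` is isomorphic to the Leavitt
path algebra of the unweighted graph with one vertex and `n` loops; the isomorphism
sends `α_i` to `e_i*` (and `α_i*` to `e_i`). -/
theorem wr1_iso_roseN (R : Type) [Ring R] (n : ℕ) :
    ∃ φ : WR1 R n ≃+* RoseN R n,
      (∀ i : Fin n, φ (wr1Gen R n (WR1Gen.a i)) = roseNGen R n (RoseNGen.estar i)) ∧
      (∀ i : Fin n, φ (wr1Gen R n (WR1Gen.astar i)) = roseNGen R n (RoseNGen.e i)) := by
  refine ⟨TwoSidedIdeal.quotientSpanEquiv _ (mapsTo_renameEquiv_wr1Rels R n)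
    (mapsTo_renameEquiv_symm_roseNRels R n), fun i => ?_, fun i => ?_⟩ <;>
  simp [wr1Gen, roseNGen, WR1Gen.equivRoseNGen]
end

section
/- If (E, ω) is a reducible weighted graph and R a ring, then L_R(E, ω) is isomorphic to the Leavitt path algebra L_R(F), where F is the unweighted graph associated with (E, ω), obtained by keeping each edge α_i whose source lies outside the weight forest and reversing each edge α_i whose source lies in the weight forest. -/
/-!
Outside the weight forest every structured edge has weight `1`; by reducibility a vertex `v` of
the forest emits a single structured edge, and at most one structured edge with source in the
forest ends at `v`. Exchange `α_i ↔ α_i*` whenever `s(α)` lies in the forest. Then (CK1) at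
`s(α)`, which reads `α_i α_j* = δ_ij s(α)`, becomes (CK2) for the reversed edges of `F`, and
(CK2) for `α`, `∑ α_i* α_i = r(α)`, becomes (CK1) in `F` at `r(α)`, whose emitted edges are
exactly the reversed `α_i`. Outside the forest the two presentations agree. The remaining
instances of (CK2), for `α ≠ β` with `s(α) ≠ s(β)`, hold in both algebras because a product of
two letters with non-matching endpoints vanishes, and the exchange preserves endpoints of letters.
-/

/-- A weighted graph: vertices, structured edges with source, range and weight. -/
structure WGraph : Type 1 where
  V : Type
  St : Type
  src : St → V
  rng : St → V
  wt : St → ℕ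
  wt_pos : ∀ α, 0 < wt α

namespace WGraph

variable (G : WGraph)

/-- The set of edges `E¹ = ⊔_α {α_1, …, α_{ω(α)}}`. -/
def E : Type := Σ α : G.St, Fin (G.wt α)

/-- Generators of the weighted Leavitt path algebra: vertices, edges and ghost edges. -/
inductive Gen (G : WGraph) : Type
  | vert : G.V → Gen G
  | edge : G.E → Gen G
  | star : G.E → Gen G

/-- The free (non-unital) `R`-ring on the generators. -/
abbrev FreeRng (R : Type) [Ring R] (G : WGraph) : Type :=
  MonoidAlgebra R (FreeSemigroup (Gen G))

variable (R : Type) [Ring R]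

noncomputable def of (x : Gen G) : FreeRng R G :=
  MonoidAlgebra.single (FreeSemigroup.of x) 1

/-- `α_i`, interpreted as `0` when `i ≥ ω(α)` (`0`-indexed). -/
noncomputable def edgeT (α : G.St) (i : ℕ) : FreeRng R G :=
  if h : i < G.wt α then G.of R (Gen.edge ⟨α, ⟨i, h⟩⟩) else 0

/-- `α_i*`, interpreted as `0` when `i ≥ ω(α)` (`0`-indexed). -/
noncomputable def starT (α : G.St) (i : ℕ) : FreeRng R G :=
  if h : i < G.wt α then G.of R (Gen.star ⟨α, ⟨i, h⟩⟩) else 0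

open Classical in
/-- The defining relations (1)–(4) of the weighted Leavitt path algebra. -/
inductive Rel : FreeRng R G → FreeRng R G → Prop
  | vv (u v : G.V) :
      Rel (G.of R (.vert u) * G.of R (.vert v)) (if u = v then G.of R (.vert u) else 0)
  | src_edge (e : G.E) :
      Rel (G.of R (.vert (G.src e.1)) * G.of R (.edge e)) (G.of R (.edge e))
  | edge_rng (e : G.E) :
      Rel (G.of R (.edge e) * G.of R (.vert (G.rng e.1))) (G.of R (.edge e))
  | rng_star (e : G.E) :
      Rel (G.of R (.vert (G.rng e.1)) * G.of R (.star e)) (G.of R (.star e))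
  | star_src (e : G.E) :
      Rel (G.of R (.star e) * G.of R (.vert (G.src e.1))) (G.of R (.star e))
  | CK1 (v : G.V) (i j : ℕ) (hi : ∃ α, G.src α = v ∧ i < G.wt α)
      (hj : ∃ α, G.src α = v ∧ j < G.wt α) :
      Rel (∑ᶠ α : {α : G.St // G.src α = v}, G.edgeT R α.1 i * G.starT R α.1 j)
          (if i = j then G.of R (.vert v) else 0)
  | CK2 (α β : G.St) :
      Rel (∑ i ∈ Finset.range (max (G.wt α) (G.wt β)), G.starT R α i * G.edgeT R β i)
          (if α = β then G.of R (.vert (G.rng α)) else 0)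

/-- The weighted Leavitt path algebra `L_R(E, ω)`, as a non-unital ring. -/
abbrev LWPA : Type := (ringConGen (G.Rel R)).Quotient

/-- The quotient map from the free `R`-ring onto `L_R(E, ω)`. -/
noncomputable def π (a : FreeRng R G) : G.LWPA R := (ringConGen (G.Rel R)).toQuotient a

/-- `G` is row-finite. -/
def RowFinite : Prop := ∀ v : G.V, {α : G.St | G.src α = v}.Finite

/-- Source of a generator, viewed as a letter of a generalised path. -/
def sOf : Gen G → G.V
  | .vert v => v
  | .edge e => G.src e.1
  | .star e => G.rng e.1

/-- Range of a generator, viewed as a letter of a generalised path. -/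
def rOf : Gen G → G.V
  | .vert v => v
  | .edge e => G.rng e.1
  | .star e => G.src e.1

/-- A choice function `v ↦ α^v` selecting, at every non-sink `v`, a structured edge
emitted by `v` of maximal weight. -/
def IsSelection (sel : G.V → G.St) : Prop :=
  ∀ v : G.V, (∃ α, G.src α = v) →
    G.src (sel v) = v ∧ ∀ β, G.src β = v → G.wt β ≤ G.wt (sel v)

/-- Forbidden adjacent pairs: words of type I (`α^v_i (α^v_j)*`) and
type II (`α_1* β_1`). -/
def BadPair (sel : G.V → G.St) : Gen G → Gen G → Prop
  | .edge e, .star f => e.1 = f.1 ∧ e.1 = sel (G.src e.1)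
  | .star e, .edge f => (e.2 : ℕ) = 0 ∧ (f.2 : ℕ) = 0
  | _, _ => False

/-- The list of letters of a word. -/
def letters (w : FreeSemigroup (Gen G)) : List (Gen G) := w.head :: w.tail

/-- A word is a generalised path: either a single vertex, or a nonempty word in the
edges and ghost edges with matching ranges and sources. -/
def IsGenPath (w : FreeSemigroup (Gen G)) : Prop :=
  (∃ v : G.V, w = FreeSemigroup.of (Gen.vert v)) ∨
  ((∀ x ∈ G.letters w, (∃ e, x = Gen.edge e) ∨ (∃ e, x = Gen.star e)) ∧
    (G.letters w).Chain' (fun x y => G.rOf x = G.sOf y))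

/-- A normal generalised path: a generalised path containing no subword of type I or II. -/
def IsNormal (sel : G.V → G.St) (w : FreeSemigroup (Gen G)) : Prop :=
  G.IsGenPath w ∧ (G.letters w).Chain' (fun x y => ¬ G.BadPair sel x y)

/-- The normal elements of the free `R`-ring: linear combinations of
normal generalised paths. -/
def NormalElems (sel : G.V → G.St) : Set (FreeRng R G) :=
  {a : FreeRng R G | ∀ w ∈ a.coeff.support, G.IsNormal sel w}

end WGraph

/-- A directed graph. -/
structure DGraph : Type 1 where
  V : Type
  Ed : Type
  src : Ed → V
  rng : Ed → V

namespace DGraph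

variable (F : DGraph)

/-- Generators of the Leavitt path algebra: vertices, edges and ghost edges. -/
inductive Gen (F : DGraph) : Type
  | vert : F.V → Gen F
  | edge : F.Ed → Gen F
  | star : F.Ed → Gen F

/-- The free (non-unital) `R`-ring on the generators. -/
abbrev FreeRng (R : Type) [Ring R] (F : DGraph) : Type :=
  MonoidAlgebra R (FreeSemigroup (Gen F))

variable (R : Type) [Ring R]

noncomputable def of (x : Gen F) : FreeRng R F :=
  MonoidAlgebra.single (FreeSemigroup.of x) 1

open Classical in
/-- The defining relations of the Leavitt path algebra `L_R(E)`. -/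
inductive Rel : FreeRng R F → FreeRng R F → Prop
  | vv (u v : F.V) :
      Rel (F.of R (.vert u) * F.of R (.vert v)) (if u = v then F.of R (.vert u) else 0)
  | src_edge (e : F.Ed) :
      Rel (F.of R (.vert (F.src e)) * F.of R (.edge e)) (F.of R (.edge e))
  | edge_rng (e : F.Ed) :
      Rel (F.of R (.edge e) * F.of R (.vert (F.rng e))) (F.of R (.edge e))
  | rng_star (e : F.Ed) :
      Rel (F.of R (.vert (F.rng e)) * F.of R (.star e)) (F.of R (.star e))
  | star_src (e : F.Ed) :
      Rel (F.of R (.star e) * F.of R (.vert (F.src e))) (F.of R (.star e))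
  | CK1 (v : F.V) (hv : ∃ e, F.src e = v) :
      Rel (∑ᶠ e : {e : F.Ed // F.src e = v}, F.of R (.edge e.1) * F.of R (.star e.1))
          (F.of R (.vert v))
  | CK2 (e f : F.Ed) :
      Rel (F.of R (.star e) * F.of R (.edge f))
          (if e = f then F.of R (.vert (F.rng e)) else 0)

/-- The Leavitt path algebra `L_R(E)`, as a non-unital ring. -/
abbrev LPA : Type := (ringConGen (F.Rel R)).Quotient

/-- The quotient map from the free `R`-ring onto `L_R(E)`. -/
noncomputable def π (a : FreeRng R F) : F.LPA R := (ringConGen (F.Rel R)).toQuotient a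

/-- `F` is row-finite. -/
def RowFinite : Prop := ∀ v : F.V, {e : F.Ed | F.src e = v}.Finite

end DGraph

namespace WGraph

variable (G : WGraph)

/-- A vertex is weighted if it emits a structured edge of weight `> 1`. -/
def WeightedVert (v : G.V) : Prop := ∃ α, G.src α = v ∧ 2 ≤ G.wt α

/-- `u ≥ v`: there is a (directed) path from `u` to `v`. -/
def Reaches : G.V → G.V → Prop :=
  Relation.ReflTransGen (fun a b => ∃ α, G.src α = a ∧ G.rng α = b)

/-- The weight forest: the union of the trees of the weighted vertices. -/
def WForest : Set G.V := {x | ∃ v, G.WeightedVert v ∧ G.Reaches v x}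

/-- `(E, ω)` is reducible: it has a weighted vertex, and every vertex `v` of the weight
forest satisfies `|s⁻¹(v)| ≤ 1` and `|r⁻¹(v) ∩ s⁻¹(weight forest)| ≤ 1`. -/
def Reducible : Prop :=
  (∃ v, G.WeightedVert v) ∧
  ∀ v ∈ G.WForest,
    (∀ α β, G.src α = v → G.src β = v → α = β) ∧
    (∀ α β, G.rng α = v → G.rng β = v →
      G.src α ∈ G.WForest → G.src β ∈ G.WForest → α = β)

open Classical in
/-- The unweighted graph `F` associated with `(E, ω)`: same vertices; each edge
`α_i ∈ E¹` is kept if `s(α) ∉ weight forest` and reversed if `s(α) ∈ weight forest`. -/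
noncomputable def assoc : DGraph where
  V := G.V
  Ed := G.E
  src := fun e => if G.src e.1 ∈ G.WForest then G.rng e.1 else G.src e.1
  rng := fun e => if G.src e.1 ∈ G.WForest then G.src e.1 else G.rng e.1

end WGraph

section

variable {A B : Type*}

def FreeSemigroup.congr {α β : Type*} (e : α ≃ β) :
    FreeSemigroup α ≃* FreeSemigroup β where
  toFun := FreeSemigroup.map e
  invFun := FreeSemigroup.map e.symm
  left_inv x := DFunLike.congr_fun
    (FreeSemigroup.hom_ext (f := (FreeSemigroup.map e.symm).comp (FreeSemigroup.map e))
      (g := MulHom.id _) (funext fun a => by simp)) x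
  right_inv x := DFunLike.congr_fun
    (FreeSemigroup.hom_ext (f := (FreeSemigroup.map e).comp (FreeSemigroup.map e.symm))
      (g := MulHom.id _) (funext fun a => by simp)) x
  map_mul' := map_mul _

@[simp] lemma FreeSemigroup.congr_of {α β : Type*} (e : α ≃ β) (a : α) :
    FreeSemigroup.congr e (.of a) = .of (e a) := rfl

/-- `MonoidAlgebra.mapDomainRingEquiv` for semigroups. -/
noncomputable def MonoidAlgebra.mapDomainNonUnitalRingEquiv (R : Type*) [Semiring R]
    [Semigroup A] [Semigroup B] (e : A ≃* B) : MonoidAlgebra R A ≃+* MonoidAlgebra R B where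
  __ := MonoidAlgebra.mapDomainAddEquiv R e.toEquiv
  map_mul' := MonoidAlgebra.mapDomain_mul e

variable [NonUnitalNonAssocRing A] [NonUnitalNonAssocRing B]

lemma RingCon.ringConGen_eq_comap_of_ringEquiv (e : A ≃+* B) {r : A → A → Prop}
    {s : B → B → Prop} (hr : ∀ a b, r a b → ringConGen s (e a) (e b))
    (hs : ∀ a b, s a b → ringConGen r (e.symm a) (e.symm b)) :
    ringConGen r = (ringConGen s).comap e := by
  refine le_antisymm (RingCon.ringConGen_le.2 hr) fun a b hab => ?_
  have := (RingCon.ringConGen_le (c := (ringConGen r).comap e.symm)).2 hs hab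
  simpa using this

/-- `RingCon.congr` for non-unital rings. -/
def RingCon.congrNonUnital {c : RingCon A} {d : RingCon B} (e : A ≃+* B) (h : c = d.comap e) :
    c.Quotient ≃+* d.Quotient where
  __ := Quotient.congr e.toEquiv (by simp [h])
  map_mul' := by rintro ⟨x⟩ ⟨y⟩; exact congrArg RingCon.toQuotient (map_mul e x y)
  map_add' := by rintro ⟨x⟩ ⟨y⟩; exact congrArg RingCon.toQuotient (map_add e x y)

end

lemma mul_eq_zero_of_mul_eq_self {M : Type*} [SemigroupWithZero M] {x y a b : M}
    (hx : x * a = x) (hy : b * y = y) (hab : a * b = 0) : x * y = 0 :=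
  calc x * y = x * (a * b) * y := by rw [← mul_assoc x, hx, mul_assoc, hy]
    _ = 0 := by rw [hab, mul_zero, zero_mul]

namespace DGraph

variable (F : DGraph)

def sOf : Gen F → F.V
  | .vert v => v
  | .edge e => F.src e
  | .star e => F.rng e

def rOf : Gen F → F.V
  | .vert v => v
  | .edge e => F.rng e
  | .star e => F.src e

variable (R : Type) [Ring R]

noncomputable def πHom : F.FreeRng R →ₙ+* F.LPA R where
  toFun := F.π R
  map_zero' := rfl
  map_add' _ _ := rfl
  map_mul' _ _ := rfl

variable {F R}

lemma πHom_apply (a : F.FreeRng R) : F.πHom R a = F.π R a := rfl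

lemma π_eq_of_rel {a b : F.FreeRng R} (h : F.Rel R a b) : F.π R a = F.π R b :=
  (RingCon.eq _).2 (RingConGen.Rel.of _ _ h)

open Classical in
lemma π_vert_mul_π_vert (u v : F.V) :
    F.π R (F.of R (.vert u)) * F.π R (F.of R (.vert v)) =
      if u = v then F.π R (F.of R (.vert u)) else 0 := by
  refine (π_eq_of_rel (Rel.vv u v)).trans ?_
  split_ifs <;> rfl

lemma π_star_mul_π_edge_self (e : F.Ed) :
    F.π R (F.of R (.star e)) * F.π R (F.of R (.edge e)) = F.π R (F.of R (.vert (F.rng e))) := by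
  classical
  have ck2 := π_eq_of_rel (R := R) (Rel.CK2 e e)
  rw [if_pos rfl] at ck2
  exact ck2

lemma π_star_mul_π_edge_of_ne {e f : F.Ed} (h : e ≠ f) :
    F.π R (F.of R (.star e)) * F.π R (F.of R (.edge f)) = 0 := by
  classical
  have ck2 := π_eq_of_rel (R := R) (Rel.CK2 e f)
  rw [if_neg h] at ck2
  exact ck2

lemma π_vert_sOf_mul (x : Gen F) :
    F.π R (F.of R (.vert (F.sOf x))) * F.π R (F.of R x) = F.π R (F.of R x) := by
  cases x with
  | vert v => simp [sOf, π_vert_mul_π_vert]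
  | edge e => exact π_eq_of_rel (Rel.src_edge e)
  | star e => exact π_eq_of_rel (Rel.rng_star e)

lemma π_mul_vert_rOf (x : Gen F) :
    F.π R (F.of R x) * F.π R (F.of R (.vert (F.rOf x))) = F.π R (F.of R x) := by
  cases x with
  | vert v => simp [rOf, π_vert_mul_π_vert]
  | edge e => exact π_eq_of_rel (Rel.edge_rng e)
  | star e => exact π_eq_of_rel (Rel.star_src e)

lemma π_mul_π_eq_zero {x y : Gen F} (h : F.rOf x ≠ F.sOf y) :
    F.π R (F.of R x) * F.π R (F.of R y) = 0 :=
  mul_eq_zero_of_mul_eq_self (π_mul_vert_rOf x) (π_vert_sOf_mul y)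
    (by rw [π_vert_mul_π_vert, if_neg h])

end DGraph

namespace WGraph

variable {G : WGraph} {R : Type} [Ring R]

lemma π_eq_of_rel {a b : G.FreeRng R} (h : G.Rel R a b) : G.π R a = G.π R b :=
  (RingCon.eq _).2 (RingConGen.Rel.of _ _ h)

open Classical in
lemma π_vert_mul_π_vert (u v : G.V) :
    G.π R (G.of R (.vert u)) * G.π R (G.of R (.vert v)) =
      if u = v then G.π R (G.of R (.vert u)) else 0 := by
  refine (π_eq_of_rel (Rel.vv u v)).trans ?_
  split_ifs <;> rfl

lemma π_vert_sOf_mul (x : Gen G) :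
    G.π R (G.of R (.vert (G.sOf x))) * G.π R (G.of R x) = G.π R (G.of R x) := by
  cases x with
  | vert v => simp [sOf, π_vert_mul_π_vert]
  | edge e => exact π_eq_of_rel (Rel.src_edge e)
  | star e => exact π_eq_of_rel (Rel.rng_star e)

lemma π_mul_vert_rOf (x : Gen G) :
    G.π R (G.of R x) * G.π R (G.of R (.vert (G.rOf x))) = G.π R (G.of R x) := by
  cases x with
  | vert v => simp [rOf, π_vert_mul_π_vert]
  | edge e => exact π_eq_of_rel (Rel.edge_rng e)
  | star e => exact π_eq_of_rel (Rel.star_src e)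

lemma π_mul_π_eq_zero {x y : Gen G} (h : G.rOf x ≠ G.sOf y) :
    G.π R (G.of R x) * G.π R (G.of R y) = 0 :=
  mul_eq_zero_of_mul_eq_self (π_mul_vert_rOf x) (π_vert_sOf_mul y)
    (by rw [π_vert_mul_π_vert, if_neg h])

lemma edgeT_of_lt {α : G.St} {i : ℕ} (h : i < G.wt α) :
    G.edgeT R α i = G.of R (.edge ⟨α, ⟨i, h⟩⟩) := dif_pos h

lemma starT_of_lt {α : G.St} {i : ℕ} (h : i < G.wt α) :
    G.starT R α i = G.of R (.star ⟨α, ⟨i, h⟩⟩) := dif_pos h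

lemma edgeT_of_le {α : G.St} {i : ℕ} (h : G.wt α ≤ i) : G.edgeT R α i = 0 :=
  dif_neg h.not_gt

lemma starT_of_le {α : G.St} {i : ℕ} (h : G.wt α ≤ i) : G.starT R α i = 0 :=
  dif_neg h.not_gt

lemma edgeT_fst (e : G.E) : G.edgeT R e.1 e.2 = G.of R (.edge e) := dif_pos e.2.2

lemma starT_fst (e : G.E) : G.starT R e.1 e.2 = G.of R (.star e) := dif_pos e.2.2

lemma edge_eq_iff {e f : G.E} (h : e.1 = f.1) : e = f ↔ (e.2 : ℕ) = f.2 := by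
  obtain ⟨α, i⟩ := e
  obtain ⟨β, j⟩ := f
  obtain rfl : α = β := h
  exact Sigma.mk.inj_iff.trans ((and_iff_right rfl).trans (heq_iff_eq.trans Fin.val_inj.symm))

lemma rng_mem_wForest {α : G.St} (h : G.src α ∈ G.WForest) : G.rng α ∈ G.WForest := by
  obtain ⟨v, hv, hreach⟩ := h
  exact ⟨v, hv, hreach.tail ⟨α, rfl, rfl⟩⟩

lemma wt_eq_one_of_src_not_mem {α : G.St} (h : G.src α ∉ G.WForest) : G.wt α = 1 := by
  by_contra hne
  exact h ⟨G.src α, ⟨α, rfl, by have := G.wt_pos α; omega⟩, .refl⟩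

lemma Reducible.eq_of_src_eq (hred : G.Reducible) {α β : G.St} (hα : G.src α ∈ G.WForest)
    (h : G.src α = G.src β) : α = β :=
  (hred.2 _ hα).1 α β rfl h.symm

lemma Reducible.eq_of_rng_eq (hred : G.Reducible) {α β : G.St} (hα : G.src α ∈ G.WForest)
    (hβ : G.src β ∈ G.WForest) (h : G.rng α = G.rng β) : α = β :=
  (hred.2 _ (rng_mem_wForest hα)).2 α β rfl h.symm hα hβ

lemma Reducible.finsum_src_eq {M : Type*} [AddCommMonoid M] (hred : G.Reducible) {α : G.St}
    (hα : G.src α ∈ G.WForest) (f : G.St → M) :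
    ∑ᶠ γ : {γ : G.St // G.src γ = G.src α}, f γ = f α :=
  let _ : Unique {γ : G.St // G.src γ = G.src α} :=
    ⟨⟨⟨α, rfl⟩⟩, fun γ => Subtype.ext (hred.eq_of_src_eq hα γ.2.symm).symm⟩
  finsum_unique _

open Classical in
lemma π_edge_mul_π_star_of_mem (hred : G.Reducible) {e f : G.E} (he : G.src e.1 ∈ G.WForest)
    (hef : e.1 = f.1) :
    G.π R (G.of R (.edge e)) * G.π R (G.of R (.star f)) =
      if e = f then G.π R (G.of R (.vert (G.src e.1))) else 0 := by
  have hf : (f.2 : ℕ) < G.wt e.1 := by rw [hef]; exact f.2.2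
  have ck1 := π_eq_of_rel (R := R)
    (Rel.CK1 (G.src e.1) e.2 f.2 ⟨e.1, rfl, e.2.2⟩ ⟨e.1, rfl, hf⟩)
  have hstar : G.starT R e.1 f.2 = G.of R (.star f) := by rw [hef]; exact starT_fst f
  rw [hred.finsum_src_eq he (fun γ => G.edgeT R γ e.2 * G.starT R γ f.2), edgeT_fst,
    hstar] at ck1
  refine ck1.trans ?_
  by_cases h : e = f
  · rw [if_pos ((edge_eq_iff hef).1 h), if_pos h]
  · rw [if_neg (mt (edge_eq_iff hef).2 h), if_neg h]
    rfl

open Classical in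
lemma π_star_mul_π_edge_of_not_mem {e f : G.E} (he : G.src e.1 ∉ G.WForest)
    (hf : G.src f.1 ∉ G.WForest) :
    G.π R (G.of R (.star e)) * G.π R (G.of R (.edge f)) =
      if e = f then G.π R (G.of R (.vert (G.rng e.1))) else 0 := by
  have hwe : G.wt e.1 = 1 := wt_eq_one_of_src_not_mem he
  have hwf : G.wt f.1 = 1 := wt_eq_one_of_src_not_mem hf
  have he0 : (e.2 : ℕ) = 0 := by have := e.2.2; omega
  have hf0 : (f.2 : ℕ) = 0 := by have := f.2.2; omega
  have hstar : G.starT R e.1 0 = G.of R (.star e) := by rw [← he0]; exact starT_fst e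
  have hedge : G.edgeT R f.1 0 = G.of R (.edge f) := by rw [← hf0]; exact edgeT_fst f
  have ck2 := π_eq_of_rel (R := R) (Rel.CK2 e.1 f.1)
  rw [hwe, hwf, max_self, Finset.range_one, Finset.sum_singleton, hstar, hedge] at ck2
  refine ck2.trans ?_
  by_cases h : e = f
  · subst h
    rw [if_pos rfl, if_pos rfl]
  · have hfst : e.1 ≠ f.1 := fun h' => h ((edge_eq_iff h').2 (he0.trans hf0.symm))
    rw [if_neg hfst, if_neg h]
    rfl

lemma assoc_src_of_mem {e : G.E} (h : G.src e.1 ∈ G.WForest) : G.assoc.src e = G.rng e.1 :=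
  if_pos h

lemma assoc_src_of_not_mem {e : G.E} (h : G.src e.1 ∉ G.WForest) :
    G.assoc.src e = G.src e.1 :=
  if_neg h

lemma assoc_rng_of_mem {e : G.E} (h : G.src e.1 ∈ G.WForest) : G.assoc.rng e = G.src e.1 :=
  if_pos h

lemma assoc_rng_of_not_mem {e : G.E} (h : G.src e.1 ∉ G.WForest) :
    G.assoc.rng e = G.rng e.1 :=
  if_neg h

lemma assoc_src_mem_wForest_iff {e : G.E} :
    G.assoc.src e ∈ G.WForest ↔ G.src e.1 ∈ G.WForest := by
  by_cases h : G.src e.1 ∈ G.WForest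
  · rw [assoc_src_of_mem h]
    exact iff_of_true (rng_mem_wForest h) h
  · rw [assoc_src_of_not_mem h]
    exact Iff.rfl

lemma assoc_src_eq_iff_of_not_mem {e : G.E} {v : G.V} (hv : v ∉ G.WForest) :
    G.assoc.src e = v ↔ G.src e.1 = v := by
  by_cases h : G.src e.1 ∈ G.WForest
  · rw [assoc_src_of_mem h]
    exact iff_of_false (fun h' => hv (h' ▸ rng_mem_wForest h)) (fun h' => hv (h' ▸ h))
  · rw [assoc_src_of_not_mem h]
    exact Iff.rfl

lemma assoc_src_eq_iff_of_mem {e : G.E} {v : G.V} (hv : v ∈ G.WForest) :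
    G.assoc.src e = v ↔ G.src e.1 ∈ G.WForest ∧ G.rng e.1 = v := by
  by_cases h : G.src e.1 ∈ G.WForest
  · rw [assoc_src_of_mem h]
    exact (and_iff_right h).symm
  · rw [assoc_src_of_not_mem h]
    exact iff_of_false (fun h' => h (h' ▸ hv)) (fun h' => h h'.1)

def outEquivOfNotMem {v : G.V} (hv : v ∉ G.WForest) :
    {α : G.St // G.src α = v} ≃ {e : G.E // G.assoc.src e = v} where
  toFun α := ⟨⟨α.1, ⟨0, G.wt_pos α.1⟩⟩, (assoc_src_eq_iff_of_not_mem hv).2 α.2⟩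
  invFun e := ⟨e.1.1, (assoc_src_eq_iff_of_not_mem hv).1 e.2⟩
  left_inv _ := rfl
  right_inv := by
    rintro ⟨⟨α, k⟩, he⟩
    have hα : G.src α = v := (assoc_src_eq_iff_of_not_mem hv).1 he
    have hwt : G.wt α = 1 := wt_eq_one_of_src_not_mem (hα ▸ hv)
    have hk : (k : ℕ) = 0 := by have := k.2; omega
    exact Subtype.ext (Sigma.ext rfl (heq_of_eq (Fin.ext hk.symm)))

noncomputable def outEquivOfMem (hred : G.Reducible) {α : G.St} (hα : G.src α ∈ G.WForest) :
    Fin (G.wt α) ≃ {e : G.E // G.assoc.src e = G.rng α} :=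
  Equiv.ofBijective (fun k => ⟨⟨α, k⟩, assoc_src_of_mem hα⟩) <| by
    refine ⟨fun k l hkl => eq_of_heq (Sigma.mk.inj_iff.1 (congrArg Subtype.val hkl)).2, ?_⟩
    rintro ⟨⟨β, k⟩, he⟩
    obtain ⟨hβ, hrng⟩ := (assoc_src_eq_iff_of_mem (rng_mem_wForest hα)).1 he
    obtain rfl := hred.eq_of_rng_eq hβ hα hrng
    exact ⟨k, rfl⟩

variable (G) in
open Classical in
noncomputable def assocGen : Gen G ≃ DGraph.Gen G.assoc where
  toFun
    | .vert v => .vert v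
    | .edge e => if G.src e.1 ∈ G.WForest then .star e else .edge e
    | .star e => if G.src e.1 ∈ G.WForest then .edge e else .star e
  invFun
    | .vert v => .vert v
    | .edge e => if G.src e.1 ∈ G.WForest then .star e else .edge e
    | .star e => if G.src e.1 ∈ G.WForest then .edge e else .star e
  left_inv x := by cases x <;> dsimp only <;> split_ifs <;> simp_all
  right_inv x := by cases x <;> dsimp only <;> split_ifs <;> simp_all

@[simp] lemma assocGen_vert (v : G.V) : G.assocGen (.vert v) = .vert v := rfl

@[simp] lemma assocGen_symm_vert (v : G.V) : G.assocGen.symm (.vert v) = .vert v := rfl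

lemma assocGen_edge_of_mem {e : G.E} (h : G.src e.1 ∈ G.WForest) :
    G.assocGen (.edge e) = .star e := if_pos h

lemma assocGen_edge_of_not_mem {e : G.E} (h : G.src e.1 ∉ G.WForest) :
    G.assocGen (.edge e) = .edge e := if_neg h

lemma assocGen_star_of_mem {e : G.E} (h : G.src e.1 ∈ G.WForest) :
    G.assocGen (.star e) = .edge e := if_pos h

lemma assocGen_star_of_not_mem {e : G.E} (h : G.src e.1 ∉ G.WForest) :
    G.assocGen (.star e) = .star e := if_neg h

lemma assocGen_symm_edge_of_mem {e : G.E} (h : G.src e.1 ∈ G.WForest) :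
    G.assocGen.symm (.edge e) = .star e := if_pos h

lemma assocGen_symm_edge_of_not_mem {e : G.E} (h : G.src e.1 ∉ G.WForest) :
    G.assocGen.symm (.edge e) = .edge e := if_neg h

lemma assocGen_symm_star_of_mem {e : G.E} (h : G.src e.1 ∈ G.WForest) :
    G.assocGen.symm (.star e) = .edge e := if_pos h

lemma assocGen_symm_star_of_not_mem {e : G.E} (h : G.src e.1 ∉ G.WForest) :
    G.assocGen.symm (.star e) = .star e := if_neg h

lemma sOf_assocGen (x : Gen G) : G.assoc.sOf (G.assocGen x) = G.sOf x := by
  rcases x with v | e | e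
  · rfl
  all_goals by_cases h : G.src e.1 ∈ G.WForest
  · rw [assocGen_edge_of_mem h]; exact assoc_rng_of_mem h
  · rw [assocGen_edge_of_not_mem h]; exact assoc_src_of_not_mem h
  · rw [assocGen_star_of_mem h]; exact assoc_src_of_mem h
  · rw [assocGen_star_of_not_mem h]; exact assoc_rng_of_not_mem h

lemma rOf_assocGen (x : Gen G) : G.assoc.rOf (G.assocGen x) = G.rOf x := by
  rcases x with v | e | e
  · rfl
  all_goals by_cases h : G.src e.1 ∈ G.WForest
  · rw [assocGen_edge_of_mem h]; exact assoc_src_of_mem h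
  · rw [assocGen_edge_of_not_mem h]; exact assoc_rng_of_not_mem h
  · rw [assocGen_star_of_mem h]; exact assoc_rng_of_mem h
  · rw [assocGen_star_of_not_mem h]; exact assoc_src_of_not_mem h

lemma sOf_assocGen_symm (x : DGraph.Gen G.assoc) : G.sOf (G.assocGen.symm x) = G.assoc.sOf x := by
  rw [← sOf_assocGen, Equiv.apply_symm_apply]

lemma rOf_assocGen_symm (x : DGraph.Gen G.assoc) : G.rOf (G.assocGen.symm x) = G.assoc.rOf x := by
  rw [← rOf_assocGen, Equiv.apply_symm_apply]

variable (G R) in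
noncomputable def freeRngEquiv : G.FreeRng R ≃+* G.assoc.FreeRng R :=
  MonoidAlgebra.mapDomainNonUnitalRingEquiv R (FreeSemigroup.congr G.assocGen)

lemma freeRngEquiv_of (x : Gen G) :
    G.freeRngEquiv R (G.of R x) = G.assoc.of R (G.assocGen x) := by
  simp [freeRngEquiv, MonoidAlgebra.mapDomainNonUnitalRingEquiv, of, DGraph.of]

lemma freeRngEquiv_symm_of (x : DGraph.Gen G.assoc) :
    (G.freeRngEquiv R).symm (G.assoc.of R x) = G.of R (G.assocGen.symm x) := by
  rw [RingEquiv.symm_apply_eq, freeRngEquiv_of, Equiv.apply_symm_apply]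

lemma freeRngEquiv_finsum_edgeT_mul_starT {v : G.V} (hv : v ∉ G.WForest) :
    G.freeRngEquiv R (∑ᶠ α : {α : G.St // G.src α = v}, G.edgeT R α 0 * G.starT R α 0) =
      ∑ᶠ e : {e : G.E // G.assoc.src e = v},
        G.assoc.of R (.edge e.1) * G.assoc.of R (.star e.1) := by
  refine ((G.freeRngEquiv R).toAddEquiv.map_finsum _).trans ?_
  rw [← finsum_comp_equiv (outEquivOfNotMem hv)]
  refine finsum_congr fun α => ?_
  have hα : G.src α.1 ∉ G.WForest := by rw [α.2]; exact hv
  rw [edgeT_of_lt (G.wt_pos α.1), starT_of_lt (G.wt_pos α.1)]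
  simp only [RingEquiv.toAddEquiv_eq_coe, RingEquiv.coe_toAddEquiv, map_mul, freeRngEquiv_of,
    assocGen_edge_of_not_mem (e := ⟨α.1, _⟩) hα,
    assocGen_star_of_not_mem (e := ⟨α.1, _⟩) hα]
  rfl

lemma freeRngEquiv_sum_starT_mul_edgeT (hred : G.Reducible) {α : G.St}
    (hα : G.src α ∈ G.WForest) :
    G.freeRngEquiv R (∑ i ∈ Finset.range (G.wt α), G.starT R α i * G.edgeT R α i) =
      ∑ᶠ e : {e : G.E // G.assoc.src e = G.rng α},
        G.assoc.of R (.edge e.1) * G.assoc.of R (.star e.1) := by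
  rw [← finsum_comp_equiv (outEquivOfMem hred hα), finsum_eq_sum_of_fintype,
    ← Fin.sum_univ_eq_sum_range, map_sum]
  refine Finset.sum_congr rfl fun k _ => ?_
  simp only [starT_of_lt k.2, edgeT_of_lt k.2, Fin.eta, map_mul, freeRngEquiv_of,
    assocGen_star_of_mem (e := ⟨α, k⟩) hα, assocGen_edge_of_mem (e := ⟨α, k⟩) hα]
  rfl

lemma π_freeRngEquiv_mul (a b : G.FreeRng R) :
    G.assoc.π R (G.freeRngEquiv R (a * b)) =
      G.assoc.π R (G.freeRngEquiv R a) * G.assoc.π R (G.freeRngEquiv R b) := by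
  rw [map_mul]
  rfl

open Classical in
lemma π_freeRngEquiv_vert_mul_vert (u v : G.V) :
    G.assoc.π R (G.freeRngEquiv R (G.of R (.vert u) * G.of R (.vert v))) =
      G.assoc.π R (G.freeRngEquiv R (if u = v then G.of R (.vert u) else 0)) := by
  rw [π_freeRngEquiv_mul, freeRngEquiv_of, freeRngEquiv_of, assocGen_vert, assocGen_vert,
    DGraph.π_vert_mul_π_vert (F := G.assoc) (R := R) u v, apply_ite (G.freeRngEquiv R),
    map_zero, freeRngEquiv_of, assocGen_vert, apply_ite (G.assoc.π R)]
  rfl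

lemma π_freeRngEquiv_vert_sOf_mul (x : Gen G) :
    G.assoc.π R (G.freeRngEquiv R (G.of R (.vert (G.sOf x)) * G.of R x)) =
      G.assoc.π R (G.freeRngEquiv R (G.of R x)) := by
  rw [π_freeRngEquiv_mul, freeRngEquiv_of, freeRngEquiv_of, assocGen_vert, ← sOf_assocGen,
    DGraph.π_vert_sOf_mul]

lemma π_freeRngEquiv_mul_vert_rOf (x : Gen G) :
    G.assoc.π R (G.freeRngEquiv R (G.of R x * G.of R (.vert (G.rOf x)))) =
      G.assoc.π R (G.freeRngEquiv R (G.of R x)) := by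
  rw [π_freeRngEquiv_mul, freeRngEquiv_of, freeRngEquiv_of, assocGen_vert, ← rOf_assocGen,
    DGraph.π_mul_vert_rOf]

open Classical in
lemma π_freeRngEquiv_ck1 (hred : G.Reducible) (v : G.V) {i j : ℕ}
    (hi : ∃ α, G.src α = v ∧ i < G.wt α) (hj : ∃ α, G.src α = v ∧ j < G.wt α) :
    G.assoc.π R (G.freeRngEquiv R
        (∑ᶠ α : {α : G.St // G.src α = v}, G.edgeT R α i * G.starT R α j)) =
      G.assoc.π R (G.freeRngEquiv R (if i = j then G.of R (.vert v) else 0)) := by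
  obtain ⟨α, rfl, hiα⟩ := hi
  obtain ⟨β, hβ, hjβ⟩ := hj
  by_cases hα : G.src α ∈ G.WForest
  · obtain rfl := hred.eq_of_src_eq hα hβ.symm
    rw [hred.finsum_src_eq hα (fun γ => G.edgeT R γ i * G.starT R γ j), edgeT_of_lt hiα,
      starT_of_lt hjβ, π_freeRngEquiv_mul, freeRngEquiv_of, freeRngEquiv_of,
      assocGen_edge_of_mem (e := ⟨α, ⟨i, hiα⟩⟩) hα,
      assocGen_star_of_mem (e := ⟨α, ⟨j, hjβ⟩⟩) hα]
    by_cases hij : i = j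
    · subst hij
      rw [if_pos rfl, freeRngEquiv_of, assocGen_vert,
        DGraph.π_star_mul_π_edge_self (F := G.assoc) (R := R) ⟨α, ⟨i, hiα⟩⟩,
        assoc_rng_of_mem (e := ⟨α, ⟨i, hiα⟩⟩) hα]
    · rw [if_neg hij, map_zero, DGraph.π_star_mul_π_edge_of_ne (F := G.assoc) (R := R)
        (e := ⟨α, ⟨i, hiα⟩⟩) (f := ⟨α, ⟨j, hjβ⟩⟩)
        fun h => hij (congrArg (fun e : G.E => (e.2 : ℕ)) h)]
      rfl
  · have hwα : G.wt α = 1 := wt_eq_one_of_src_not_mem hα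
    have hwβ : G.wt β = 1 := wt_eq_one_of_src_not_mem (hβ ▸ hα)
    obtain rfl : i = 0 := by omega
    obtain rfl : j = 0 := by omega
    rw [freeRngEquiv_finsum_edgeT_mul_starT hα, if_pos rfl, freeRngEquiv_of, assocGen_vert]
    have hsrc : G.assoc.src ⟨α, ⟨0, G.wt_pos α⟩⟩ = G.src α := assoc_src_of_not_mem hα
    exact DGraph.π_eq_of_rel (DGraph.Rel.CK1 _ ⟨_, hsrc⟩)

lemma π_freeRngEquiv_starT_mul_edgeT_of_ne (hred : G.Reducible) {α β : G.St} (hαβ : α ≠ β)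
    (i : ℕ) : G.assoc.π R (G.freeRngEquiv R (G.starT R α i * G.edgeT R β i)) = 0 := by
  rcases lt_or_ge i (G.wt α) with hiα | hiα
  swap
  · rw [starT_of_le hiα, zero_mul, map_zero]
    rfl
  rcases lt_or_ge i (G.wt β) with hiβ | hiβ
  swap
  · rw [edgeT_of_le hiβ, mul_zero, map_zero]
    rfl
  rw [starT_of_lt hiα, edgeT_of_lt hiβ, π_freeRngEquiv_mul, freeRngEquiv_of, freeRngEquiv_of]
  by_cases hs : G.src α = G.src β
  · have hα : G.src α ∉ G.WForest := fun h => hαβ (hred.eq_of_src_eq h hs)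
    have hβ : G.src β ∉ G.WForest := hs ▸ hα
    rw [assocGen_star_of_not_mem (e := ⟨α, ⟨i, hiα⟩⟩) hα,
      assocGen_edge_of_not_mem (e := ⟨β, ⟨i, hiβ⟩⟩) hβ]
    exact DGraph.π_star_mul_π_edge_of_ne fun h => hαβ (congrArg (fun e : G.E => e.1) h)
  · exact DGraph.π_mul_π_eq_zero (by rwa [rOf_assocGen, sOf_assocGen])

open Classical in
lemma π_freeRngEquiv_ck2 (hred : G.Reducible) (α β : G.St) :
    G.assoc.π R (G.freeRngEquiv R
        (∑ i ∈ Finset.range (max (G.wt α) (G.wt β)), G.starT R α i * G.edgeT R β i)) =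
      G.assoc.π R (G.freeRngEquiv R (if α = β then G.of R (.vert (G.rng α)) else 0)) := by
  by_cases hαβ : α = β
  swap
  · rw [if_neg hαβ, map_zero, map_sum, ← DGraph.πHom_apply, map_sum]
    exact Finset.sum_eq_zero fun i _ => π_freeRngEquiv_starT_mul_edgeT_of_ne hred hαβ i
  subst hαβ
  rw [max_self, if_pos rfl, freeRngEquiv_of, assocGen_vert]
  by_cases hα : G.src α ∈ G.WForest
  · rw [freeRngEquiv_sum_starT_mul_edgeT hred hα]
    exact DGraph.π_eq_of_rel
      (DGraph.Rel.CK1 _ ⟨⟨α, ⟨0, G.wt_pos α⟩⟩, assoc_src_of_mem hα⟩)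
  · have hwα : G.wt α = 1 := wt_eq_one_of_src_not_mem hα
    rw [hwα, Finset.range_one, Finset.sum_singleton, starT_of_lt (G.wt_pos α),
      edgeT_of_lt (G.wt_pos α), π_freeRngEquiv_mul, freeRngEquiv_of, freeRngEquiv_of,
      assocGen_star_of_not_mem (e := ⟨α, ⟨0, G.wt_pos α⟩⟩) hα,
      assocGen_edge_of_not_mem (e := ⟨α, ⟨0, G.wt_pos α⟩⟩) hα,
      DGraph.π_star_mul_π_edge_self (F := G.assoc) (R := R) ⟨α, ⟨0, G.wt_pos α⟩⟩,
      assoc_rng_of_not_mem (e := ⟨α, ⟨0, G.wt_pos α⟩⟩) hα]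

lemma π_freeRngEquiv_eq_of_rel (hred : G.Reducible) {a b : G.FreeRng R} (h : G.Rel R a b) :
    G.assoc.π R (G.freeRngEquiv R a) = G.assoc.π R (G.freeRngEquiv R b) := by
  cases h with
  | vv u v => exact π_freeRngEquiv_vert_mul_vert u v
  | src_edge e => exact π_freeRngEquiv_vert_sOf_mul (.edge e)
  | edge_rng e => exact π_freeRngEquiv_mul_vert_rOf (.edge e)
  | rng_star e => exact π_freeRngEquiv_vert_sOf_mul (.star e)
  | star_src e => exact π_freeRngEquiv_mul_vert_rOf (.star e)
  | CK1 v i j hi hj => exact π_freeRngEquiv_ck1 hred v hi hj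
  | CK2 α β => exact π_freeRngEquiv_ck2 hred α β

lemma π_freeRngEquiv_symm_mul (a b : G.assoc.FreeRng R) :
    G.π R ((G.freeRngEquiv R).symm (a * b)) =
      G.π R ((G.freeRngEquiv R).symm a) * G.π R ((G.freeRngEquiv R).symm b) := by
  rw [map_mul]
  rfl

open Classical in
lemma π_freeRngEquiv_symm_vert_mul_vert (u v : G.V) :
    G.π R ((G.freeRngEquiv R).symm (G.assoc.of R (.vert u) * G.assoc.of R (.vert v))) =
      G.π R ((G.freeRngEquiv R).symm (if u = v then G.assoc.of R (.vert u) else 0)) := by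
  rw [π_freeRngEquiv_symm_mul, freeRngEquiv_symm_of, freeRngEquiv_symm_of, assocGen_symm_vert,
    assocGen_symm_vert, π_vert_mul_π_vert, apply_ite (G.freeRngEquiv R).symm, map_zero,
    freeRngEquiv_symm_of, assocGen_symm_vert, apply_ite (G.π R)]
  rfl

lemma π_freeRngEquiv_symm_vert_sOf_mul (x : DGraph.Gen G.assoc) :
    G.π R ((G.freeRngEquiv R).symm (G.assoc.of R (.vert (G.assoc.sOf x)) * G.assoc.of R x)) =
      G.π R ((G.freeRngEquiv R).symm (G.assoc.of R x)) := by
  rw [π_freeRngEquiv_symm_mul, freeRngEquiv_symm_of, freeRngEquiv_symm_of, ← sOf_assocGen_symm,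
    assocGen_symm_vert, π_vert_sOf_mul]

lemma π_freeRngEquiv_symm_mul_vert_rOf (x : DGraph.Gen G.assoc) :
    G.π R ((G.freeRngEquiv R).symm (G.assoc.of R x * G.assoc.of R (.vert (G.assoc.rOf x)))) =
      G.π R ((G.freeRngEquiv R).symm (G.assoc.of R x)) := by
  rw [π_freeRngEquiv_symm_mul, freeRngEquiv_symm_of, freeRngEquiv_symm_of, ← rOf_assocGen_symm,
    assocGen_symm_vert, π_mul_vert_rOf]

lemma π_freeRngEquiv_symm_ck1 (hred : G.Reducible) {v : G.V} (hv : ∃ e, G.assoc.src e = v) :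
    G.π R ((G.freeRngEquiv R).symm
        (∑ᶠ e : {e : G.E // G.assoc.src e = v},
          G.assoc.of R (.edge e.1) * G.assoc.of R (.star e.1))) =
      G.π R ((G.freeRngEquiv R).symm (G.assoc.of R (.vert v))) := by
  obtain ⟨e, he⟩ := hv
  rw [freeRngEquiv_symm_of, assocGen_symm_vert]
  by_cases hvW : v ∈ G.WForest
  · obtain ⟨hs, rfl⟩ := (assoc_src_eq_iff_of_mem hvW).1 he
    rw [← freeRngEquiv_sum_starT_mul_edgeT hred hs, RingEquiv.symm_apply_apply]
    have ck2 := π_eq_of_rel (R := R) (Rel.CK2 e.1 e.1)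
    rwa [max_self, if_pos rfl] at ck2
  · have hs : G.src e.1 = v := (assoc_src_eq_iff_of_not_mem hvW).1 he
    rw [← freeRngEquiv_finsum_edgeT_mul_starT hvW, RingEquiv.symm_apply_apply]
    have ck1 := π_eq_of_rel (R := R)
      (Rel.CK1 v 0 0 ⟨e.1, hs, G.wt_pos _⟩ ⟨e.1, hs, G.wt_pos _⟩)
    rwa [if_pos rfl] at ck1

open Classical in
lemma π_freeRngEquiv_symm_ck2 (hred : G.Reducible) (e f : G.assoc.Ed) :
    G.π R ((G.freeRngEquiv R).symm (G.assoc.of R (.star e) * G.assoc.of R (.edge f))) =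
      G.π R ((G.freeRngEquiv R).symm
        (if e = f then G.assoc.of R (.vert (G.assoc.rng e)) else 0)) := by
  rw [π_freeRngEquiv_symm_mul, freeRngEquiv_symm_of, freeRngEquiv_symm_of,
    apply_ite (G.freeRngEquiv R).symm, map_zero, freeRngEquiv_symm_of, apply_ite (G.π R)]
  by_cases hs : G.assoc.src e = G.assoc.src f
  swap
  · rw [if_neg fun h : e = f => hs (congrArg G.assoc.src h),
      π_mul_π_eq_zero (by rwa [rOf_assocGen_symm, sOf_assocGen_symm])]
    rfl
  by_cases he : G.src e.1 ∈ G.WForest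
  · have hf : G.src f.1 ∈ G.WForest :=
      assoc_src_mem_wForest_iff.1 (hs ▸ assoc_src_mem_wForest_iff.2 he)
    have hef : e.1 = f.1 := hred.eq_of_rng_eq he hf
      (by rwa [assoc_src_of_mem he, assoc_src_of_mem hf] at hs)
    rw [assoc_rng_of_mem he, assocGen_symm_vert, assocGen_symm_star_of_mem he,
      assocGen_symm_edge_of_mem hf, π_edge_mul_π_star_of_mem hred he hef]
    rfl
  · have hf : G.src f.1 ∉ G.WForest :=
      fun hf => he (assoc_src_mem_wForest_iff.1 (hs ▸ assoc_src_mem_wForest_iff.2 hf))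
    rw [assoc_rng_of_not_mem he, assocGen_symm_vert, assocGen_symm_star_of_not_mem he,
      assocGen_symm_edge_of_not_mem hf, π_star_mul_π_edge_of_not_mem he hf]
    rfl

lemma π_freeRngEquiv_symm_eq_of_rel (hred : G.Reducible) {a b : G.assoc.FreeRng R}
    (h : G.assoc.Rel R a b) :
    G.π R ((G.freeRngEquiv R).symm a) = G.π R ((G.freeRngEquiv R).symm b) := by
  cases h with
  | vv u v => exact π_freeRngEquiv_symm_vert_mul_vert u v
  | src_edge e => exact π_freeRngEquiv_symm_vert_sOf_mul (.edge e)
  | edge_rng e => exact π_freeRngEquiv_symm_mul_vert_rOf (.edge e)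
  | rng_star e => exact π_freeRngEquiv_symm_vert_sOf_mul (.star e)
  | star_src e => exact π_freeRngEquiv_symm_mul_vert_rOf (.star e)
  | CK1 v hv => exact π_freeRngEquiv_symm_ck1 hred hv
  | CK2 e f => exact π_freeRngEquiv_symm_ck2 hred e f

variable (R) in
noncomputable def lwpaEquivLpa (hred : G.Reducible) : G.LWPA R ≃+* G.assoc.LPA R :=
  RingCon.congrNonUnital (G.freeRngEquiv R) <|
    RingCon.ringConGen_eq_comap_of_ringEquiv _
      (fun _ _ h => (RingCon.eq _).1 (π_freeRngEquiv_eq_of_rel hred h))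
      (fun _ _ h => (RingCon.eq _).1 (π_freeRngEquiv_symm_eq_of_rel hred h))

lemma lwpaEquivLpa_π_of (hred : G.Reducible) (x : Gen G) :
    lwpaEquivLpa R hred (G.π R (G.of R x)) = G.assoc.π R (G.assoc.of R (G.assocGen x)) :=
  congrArg (G.assoc.π R) (freeRngEquiv_of x)

end WGraph

/-- If `(E, ω)` is a reducible weighted graph and `R` a ring, then
`L_R(E, ω)` is isomorphic to the Leavitt path algebra `L_R(F)` of the associated
unweighted graph `F`, via the isomorphism which keeps each edge whose source lies
outside the weight forest and reverses (i.e. exchanges with its ghost) each edge whose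
source lies in the weight forest. -/
theorem reducible_wlpa_iso_lpa (G : WGraph) (R : Type) [Ring R] (hred : G.Reducible) :
    ∃ φ : G.LWPA R ≃+* DGraph.LPA (G.assoc) R,
      (∀ v : G.V,
        φ (G.π R (G.of R (.vert v))) = DGraph.π G.assoc R (DGraph.of G.assoc R (.vert v))) ∧
      (∀ e : G.E, G.src e.1 ∉ G.WForest →
        φ (G.π R (G.of R (.edge e))) = DGraph.π G.assoc R (DGraph.of G.assoc R (.edge e)) ∧
        φ (G.π R (G.of R (.star e))) = DGraph.π G.assoc R (DGraph.of G.assoc R (.star e))) ∧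
      (∀ e : G.E, G.src e.1 ∈ G.WForest →
        φ (G.π R (G.of R (.edge e))) = DGraph.π G.assoc R (DGraph.of G.assoc R (.star e)) ∧
        φ (G.π R (G.of R (.star e))) = DGraph.π G.assoc R (DGraph.of G.assoc R (.edge e))) := by
  refine ⟨WGraph.lwpaEquivLpa R hred, fun v => WGraph.lwpaEquivLpa_π_of hred (.vert v),
    fun e he => ⟨?_, ?_⟩, fun e he => ⟨?_, ?_⟩⟩
  · rw [WGraph.lwpaEquivLpa_π_of, WGraph.assocGen_edge_of_not_mem he]
  · rw [WGraph.lwpaEquivLpa_π_of, WGraph.assocGen_star_of_not_mem he]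
  · rw [WGraph.lwpaEquivLpa_π_of, WGraph.assocGen_edge_of_mem he]
  · rw [WGraph.lwpaEquivLpa_π_of, WGraph.assocGen_star_of_mem he]
end
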